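/- arXiv:quant-ph/0603116 — 11 statements merged into one kernel-verified Lean document; each statement's English description precedes it below -/
import Mathlib

section
/- Fix a density matrix ρ on ℂ^n and constants C ∈ ℝ, D > 0. For each positive definite density matrix σ with spectral decomposition σ = Σ_i s_i |f_i⟩⟨f_i|, define the expected reward R̄(ρ:σ) = Σ_i ⟨f_i|ρ|f_i⟩ (C + D ln s_i) = C + D·Tr-type sum Σ_{i,j} r_j |⟨f_i|e_j⟩|² ln s_i where ρ = Σ_j r_j |e_j⟩⟨e_j|. Then R̄(ρ:σ) ≤ R̄(ρ:ρ) for every positive definite density matrix σ (where R̄(ρ:ρ) = C − D·H(ρ), interpreting 0 ln 0 = 0 if ρ is not positive definite), with equality if and only if σ = ρ. That is, the expected reward under the honest-experimentalist reward scheme is uniquely maximized by reporting the true state. -/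
open Matrix BigOperators ComplexOrder

lemma hers_vmv_mulVec {n : ℕ} (v w x : Fin n → ℂ) :
    vecMulVec v w *ᵥ x = (w ⬝ᵥ x) • v := by
  funext i
  simp [mulVec, vecMulVec, dotProduct, Finset.sum_mul, Finset.mul_sum, mul_comm, mul_assoc,
    mul_left_comm]

lemma hers_mul_vmv {n : ℕ} (A : Matrix (Fin n) (Fin n) ℂ) (v w : Fin n → ℂ) :
    A * vecMulVec v w = vecMulVec (A *ᵥ v) w := by
  ext i j
  simp [Matrix.mul_apply, vecMulVec, mulVec, dotProduct, Finset.sum_mul, mul_assoc]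

lemma hers_completeness {n : ℕ} (e : Fin n → (Fin n → ℂ))
    (he : ∀ i j, star (e i) ⬝ᵥ e j = if i = j then (1 : ℂ) else 0) :
    ∑ j, vecMulVec (e j) (star (e j)) = (1 : Matrix (Fin n) (Fin n) ℂ) := by
  have hM : (Matrix.of e) * (Matrix.of e)ᴴ = 1 := by
    ext i j
    have := he j i
    simp only [dotProduct, Pi.star_apply] at this
    simp only [Matrix.mul_apply, Matrix.conjTranspose_apply, Matrix.of_apply, Matrix.one_apply]
    rw [Finset.sum_congr rfl (fun k (_ : k ∈ Finset.univ) => mul_comm (e i k) (star (e j k))), this]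
    by_cases h : i = j <;> simp [h, eq_comm]
  have hM2 : (Matrix.of e)ᴴ * (Matrix.of e) = 1 := mul_eq_one_comm.mp hM
  ext k l
  have := congrFun (congrFun hM2 k) l
  simp only [Matrix.mul_apply, Matrix.conjTranspose_apply, Matrix.of_apply] at this
  simp only [Matrix.sum_apply, vecMulVec_apply, Pi.star_apply]
  calc ∑ j, e j k * star (e j l) = star (∑ j, star (e j k) * e j l) := by
        push_cast [star_sum]
        exact Finset.sum_congr rfl fun j _ => by simp [mul_comm]
    _ = (1 : Matrix (Fin n) (Fin n) ℂ) k l := by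
        rw [this]; by_cases h : k = l <;> simp [h, Matrix.one_apply]

lemma hers_klein_le {r s : ℝ} (hr : 0 ≤ r) (hs : 0 < s) :
    r * Real.log s - r * Real.log r ≤ s - r := by
  rcases eq_or_lt_of_le hr with h | h
  · simp [← h]; linarith
  · have h1 : Real.log (s / r) ≤ s / r - 1 := Real.log_le_sub_one_of_pos (by positivity)
    have h2 : Real.log (s / r) = Real.log s - Real.log r := Real.log_div (ne_of_gt hs) (ne_of_gt h)
    have := mul_le_mul_of_nonneg_left h1 hr
    rw [h2] at this
    have hr' : r ≠ 0 := ne_of_gt h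
    calc r * Real.log s - r * Real.log r = r * (Real.log s - Real.log r) := by ring
      _ ≤ r * (s / r - 1) := this
      _ = s - r := by field_simp
lemma hers_klein_eq {r s : ℝ} (hr : 0 ≤ r) (hs : 0 < s)
    (h : r * Real.log s - r * Real.log r = s - r) : r = s := by
  rcases eq_or_lt_of_le hr with h0 | h0
  · exfalso; rw [← h0] at h; simp at h; linarith
  · by_contra hne
    have hx : s / r ≠ 1 := by
      intro hc; apply hne; field_simp at hc; linarith
    have h1 : Real.log (s / r) < s / r - 1 := Real.log_lt_sub_one_of_pos (by positivity) hx
    have h2 : Real.log (s / r) = Real.log s - Real.log r := Real.log_div (ne_of_gt hs) (ne_of_gt h0)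
    have := mul_lt_mul_of_pos_left h1 h0
    rw [h2] at this
    have hr' : r ≠ 0 := ne_of_gt h0
    have : r * Real.log s - r * Real.log r < s - r := by
      calc r * Real.log s - r * Real.log r = r * (Real.log s - Real.log r) := by ring
        _ < r * (s / r - 1) := this
        _ = s - r := by field_simp
    linarith

lemma hers_sum_mulVec {n : ℕ} (A : Fin n → Matrix (Fin n) (Fin n) ℂ) (v : Fin n → ℂ) :
    (∑ i, A i) *ᵥ v = ∑ i, A i *ᵥ v := by
  ext k
  simp [mulVec, dotProduct, Matrix.sum_apply, Finset.sum_mul]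
  rw [Finset.sum_comm]

lemma hers_dot_sum {n : ℕ} (u : Fin n → ℂ) (g : Fin n → ℂ) (w : Fin n → (Fin n → ℂ)) :
    u ⬝ᵥ (∑ j, g j • w j) = ∑ j, g j * (u ⬝ᵥ w j) := by
  simp [dotProduct, Finset.sum_apply, Finset.mul_sum, mul_comm, mul_left_comm]
  rw [Finset.sum_comm]

lemma hers_decomp_mulVec {n : ℕ} (g : Fin n → ℂ) (w : Fin n → (Fin n → ℂ)) (v : Fin n → ℂ) :
    (∑ j, g j • vecMulVec (w j) (star (w j))) *ᵥ v
      = ∑ j, (g j * (star (w j) ⬝ᵥ v)) • w j := by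
  rw [hers_sum_mulVec]
  refine Finset.sum_congr rfl fun j _ => ?_
  rw [smul_mulVec, hers_vmv_mulVec, smul_smul]

lemma hers_smul_vmv {n : ℕ} (c : ℂ) (v w : Fin n → ℂ) :
    vecMulVec (c • v) w = c • vecMulVec v w := by
  ext i j; simp [vecMulVec, mul_assoc]

/-- Fix a density matrix `ρ` (with eigendecomposition `r`, `e`) and constants
`C ∈ ℝ`, `D > 0`.  For every positive definite density matrix
`σ = ∑ i, s i • |f i⟩⟨f i|`, the HERS expected reward
`R̄(ρ:σ) = ∑ i, ⟨f i|ρ|f i⟩ * (C + D ln (s i))` satisfies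
`R̄(ρ:σ) ≤ R̄(ρ:ρ) = C - D * H(ρ)`, with equality if and only if `σ = ρ`. -/

theorem stmt_1 {n : ℕ} (ρ : Matrix (Fin n) (Fin n) ℂ)
    (hρ : ρ.PosSemidef) (hρtr : ρ.trace = 1)
    (r : Fin n → ℝ) (e : Fin n → (Fin n → ℂ))
    (he : ∀ i j, star (e i) ⬝ᵥ e j = if i = j then (1 : ℂ) else 0)
    (hρd : ρ = ∑ i, (r i : ℂ) • vecMulVec (e i) (star (e i)))
    (C D : ℝ) (hD : 0 < D) :
    ∀ (σ : Matrix (Fin n) (Fin n) ℂ) (s : Fin n → ℝ) (f : Fin n → (Fin n → ℂ)),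
      (∀ i j, star (f i) ⬝ᵥ f j = if i = j then (1 : ℂ) else 0) →
      σ = ∑ i, (s i : ℂ) • vecMulVec (f i) (star (f i)) →
      (∀ i, 0 < s i) → σ.trace = 1 →
      (∑ i, (star (f i) ⬝ᵥ ρ.mulVec (f i)).re * (C + D * Real.log (s i))
          ≤ C - D * (-∑ j, r j * Real.log (r j)))
      ∧ ((∑ i, (star (f i) ⬝ᵥ ρ.mulVec (f i)).re * (C + D * Real.log (s i))
          = C - D * (-∑ j, r j * Real.log (r j))) ↔ σ = ρ) := by
  intro σ s f hf hσd hs hσtr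
  -- the overlap amplitudes and probabilities
  set c : Fin n → Fin n → ℂ := fun i j => star (f i) ⬝ᵥ e j with hc
  set a : Fin n → Fin n → ℝ := fun i j => Complex.normSq (c i j) with ha
  have ha_nonneg : ∀ i j, 0 ≤ a i j := fun i j => Complex.normSq_nonneg _
  have hconj : ∀ i j, star (e j) ⬝ᵥ f i = star (c i j) := by
    intro i j
    simp only [hc, dotProduct, star_sum, star_mul', star_star, Pi.star_apply]
    exact Finset.sum_congr rfl fun k _ => mul_comm _ _
  -- ρ acting on a vector
  have hρv : ∀ v : Fin n → ℂ, ρ *ᵥ v = ∑ j, ((r j : ℂ) * (star (e j) ⬝ᵥ v)) • e j := by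
    intro v; rw [hρd, hers_decomp_mulVec]
  have hσv : ∀ v : Fin n → ℂ, σ *ᵥ v = ∑ j, ((s j : ℂ) * (star (f j) ⬝ᵥ v)) • f j := by
    intro v; rw [hσd, hers_decomp_mulVec]
  -- the probability p i
  have hp : ∀ i, star (f i) ⬝ᵥ ρ *ᵥ f i = ((∑ j, r j * a i j : ℝ) : ℂ) := by
    intro i
    rw [hρv, hers_dot_sum]
    push_cast
    refine Finset.sum_congr rfl fun j _ => ?_
    rw [hconj i j]
    have : (star (f i) ⬝ᵥ e j) = c i j := rfl
    rw [this, mul_assoc, mul_comm (star (c i j)) (c i j), Complex.star_def, Complex.mul_conj]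
  -- row sums of a are 1
  have hrow : ∀ i, ∑ j, a i j = 1 := by
    intro i
    have h1 : star (f i) ⬝ᵥ ((∑ j, vecMulVec (e j) (star (e j))) *ᵥ f i) = 1 := by
      rw [hers_completeness e he, Matrix.one_mulVec, hf i i]
      simp
    rw [hers_sum_mulVec] at h1
    have h2 : ∀ j, vecMulVec (e j) (star (e j)) *ᵥ f i = (star (c i j)) • e j := by
      intro j; rw [hers_vmv_mulVec, hconj]
    simp only [h2] at h1
    rw [hers_dot_sum] at h1
    have h3 : ∀ j, star (c i j) * (star (f i) ⬝ᵥ e j) = ((a i j : ℝ) : ℂ) := by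
      intro j
      have : star (f i) ⬝ᵥ e j = c i j := rfl
      rw [this, mul_comm, Complex.star_def, Complex.mul_conj]
    simp only [h3] at h1
    exact_mod_cast h1
  -- column sums of a are 1
  have hcol : ∀ j, ∑ i, a i j = 1 := by
    intro j
    have h1 : star (e j) ⬝ᵥ ((∑ i, vecMulVec (f i) (star (f i))) *ᵥ e j) = 1 := by
      rw [hers_completeness f hf, Matrix.one_mulVec, he j j]
      simp
    rw [hers_sum_mulVec] at h1
    have h2 : ∀ i, vecMulVec (f i) (star (f i)) *ᵥ e j = (c i j) • f i := by
      intro i; rw [hers_vmv_mulVec]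
    simp only [h2] at h1
    rw [hers_dot_sum] at h1
    have h3 : ∀ i, c i j * (star (e j) ⬝ᵥ f i) = ((a i j : ℝ) : ℂ) := by
      intro i
      rw [hconj, Complex.star_def, Complex.mul_conj]
    simp only [h3] at h1
    exact_mod_cast h1
  -- trace identities
  have htr : ∀ (g : Fin n → ℝ) (w : Fin n → (Fin n → ℂ)),
      (∀ i j, star (w i) ⬝ᵥ w j = if i = j then (1 : ℂ) else 0) →
      (∑ i, (g i : ℂ) • vecMulVec (w i) (star (w i))).trace = ((∑ i, g i : ℝ) : ℂ) := by
    intro g w hw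
    rw [Matrix.trace_sum]
    push_cast
    refine Finset.sum_congr rfl fun i _ => ?_
    rw [Matrix.trace_smul]
    have : (vecMulVec (w i) (star (w i))).trace = star (w i) ⬝ᵥ w i := by
      simp [Matrix.trace, Matrix.diag, vecMulVec, dotProduct, mul_comm]
    rw [this, hw i i]
    simp
  have hrsum : ∑ j, r j = 1 := by
    have := htr r e he
    rw [← hρd, hρtr] at this
    exact_mod_cast this.symm
  have hssum : ∑ i, s i = 1 := by
    have := htr s f hf
    rw [← hσd, hσtr] at this
    exact_mod_cast this.symm
  -- eigenvalues of ρ are nonnegative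
  have hrnn : ∀ j, 0 ≤ r j := by
    intro j
    have h1 : star (e j) ⬝ᵥ ρ *ᵥ e j = ((r j : ℝ) : ℂ) := by
      rw [hρv, hers_dot_sum]
      rw [Finset.sum_eq_single j]
      · rw [he j j]; simp
      · intro k _ hk
        rw [he k j]
        simp [hk]
      · simp
    have := hρ.dotProduct_mulVec_nonneg (e j)
    rw [h1] at this
    exact_mod_cast this
  -- key quantities
  set X := ∑ i, ∑ j, a i j * (r j * Real.log (s i)) with hX
  set Y := ∑ j, r j * Real.log (r j) with hY
  set T : Fin n → Fin n → ℝ := fun i j =>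
    a i j * ((s i - r j) - (r j * Real.log (s i) - r j * Real.log (r j))) with hT
  have hT_nonneg : ∀ i j, 0 ≤ T i j := fun i j =>
    mul_nonneg (ha_nonneg i j) (by have := hers_klein_le (hrnn j) (hs i); linarith)
  have hTsum : ∑ i, ∑ j, T i j = Y - X := by
    have h1 : ∑ i, ∑ j, a i j * s i = 1 := by
      calc ∑ i, ∑ j, a i j * s i = ∑ i, (∑ j, a i j) * s i := by
            refine Finset.sum_congr rfl fun i _ => ?_; rw [Finset.sum_mul]
        _ = ∑ i, s i := by refine Finset.sum_congr rfl fun i _ => ?_; rw [hrow i, one_mul]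
        _ = 1 := hssum
    have h2 : ∑ i, ∑ j, a i j * r j = 1 := by
      rw [Finset.sum_comm]
      calc ∑ j, ∑ i, a i j * r j = ∑ j, (∑ i, a i j) * r j := by
            refine Finset.sum_congr rfl fun j _ => ?_; rw [Finset.sum_mul]
        _ = ∑ j, r j := by refine Finset.sum_congr rfl fun j _ => ?_; rw [hcol j, one_mul]
        _ = 1 := hrsum
    have h3 : ∑ i, ∑ j, a i j * (r j * Real.log (r j)) = Y := by
      rw [Finset.sum_comm]
      calc ∑ j, ∑ i, a i j * (r j * Real.log (r j))
          = ∑ j, (∑ i, a i j) * (r j * Real.log (r j)) := by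
            refine Finset.sum_congr rfl fun j _ => ?_; rw [Finset.sum_mul]
        _ = Y := by rw [hY]; refine Finset.sum_congr rfl fun j _ => ?_; rw [hcol j, one_mul]
    have hexp : ∀ i j, T i j = a i j * s i - a i j * r j
        - a i j * (r j * Real.log (s i)) + a i j * (r j * Real.log (r j)) := by
      intro i j; rw [hT]; ring
    simp only [hexp, Finset.sum_add_distrib, Finset.sum_sub_distrib]
    rw [h1, h2, h3, ← hX]
    ring
  have hXY_le : X ≤ Y := by
    have h0 : 0 ≤ ∑ i, ∑ j, T i j :=
      Finset.sum_nonneg fun i _ => Finset.sum_nonneg fun j _ => hT_nonneg i j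
    linarith [hTsum]
  -- rewrite the reward
  have hLHS : ∑ i, (star (f i) ⬝ᵥ ρ *ᵥ f i).re * (C + D * Real.log (s i)) = C + D * X := by
    have hre : ∀ i, (star (f i) ⬝ᵥ ρ *ᵥ f i).re = ∑ j, r j * a i j := by
      intro i; rw [hp i]; exact Complex.ofReal_re _
    simp only [hre]
    have hq : ∑ i, ∑ j, r j * a i j = 1 := by
      rw [Finset.sum_comm]
      calc ∑ j, ∑ i, r j * a i j = ∑ j, r j * (∑ i, a i j) := by
            refine Finset.sum_congr rfl fun j _ => ?_; rw [Finset.mul_sum]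
        _ = ∑ j, r j := by refine Finset.sum_congr rfl fun j _ => ?_; rw [hcol j, mul_one]
        _ = 1 := hrsum
    calc ∑ i, (∑ j, r j * a i j) * (C + D * Real.log (s i))
        = ∑ i, ((∑ j, r j * a i j) * C + D * ∑ j, a i j * (r j * Real.log (s i))) := by
          refine Finset.sum_congr rfl fun i _ => ?_
          rw [mul_add]
          congr 1
          rw [Finset.sum_mul, Finset.mul_sum]
          refine Finset.sum_congr rfl fun j _ => ?_
          ring
      _ = C + D * X := by
          rw [Finset.sum_add_distrib, ← Finset.sum_mul, hq, one_mul, ← Finset.mul_sum, ← hX]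
  have hRHS : C - D * (-Y) = C + D * Y := by ring
  constructor
  · rw [hLHS, hRHS]
    have := mul_le_mul_of_nonneg_left hXY_le hD.le
    linarith
  · constructor
    · intro heq
      rw [hLHS, hRHS] at heq
      have hXY : X = Y := by
        have : D * X = D * Y := by linarith
        exact mul_left_cancel₀ (ne_of_gt hD) this
      have hsum0 : ∑ i, ∑ j, T i j = 0 := by rw [hTsum, hXY]; ring
      have hT0 : ∀ i j, T i j = 0 := by
        have h1 := (Finset.sum_eq_zero_iff_of_nonneg
          (fun i _ => Finset.sum_nonneg fun j _ => hT_nonneg i j)).mp hsum0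
        intro i j
        have h2 := (Finset.sum_eq_zero_iff_of_nonneg
          (fun j _ => hT_nonneg i j)).mp (h1 i (Finset.mem_univ i))
        exact h2 j (Finset.mem_univ j)
      have hcond : ∀ i j, c i j = 0 ∨ r j = s i := by
        intro i j
        rcases mul_eq_zero.mp (hT0 i j) with h | h
        · left; exact Complex.normSq_eq_zero.mp h
        · right
          refine hers_klein_eq (hrnn j) (hs i) ?_
          linarith
      have hfix : ∀ i, ρ *ᵥ f i = (s i : ℂ) • f i := by
        intro i
        have hexp : f i = ∑ j, (star (c i j)) • e j := by
          conv_lhs => rw [← Matrix.one_mulVec (f i)]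
          rw [← hers_completeness e he, hers_sum_mulVec]
          refine Finset.sum_congr rfl fun j _ => ?_
          rw [hers_vmv_mulVec, hconj]
        rw [hρv]
        conv_rhs => rw [hexp]
        rw [Finset.smul_sum]
        refine Finset.sum_congr rfl fun j _ => ?_
        rw [hconj]
        rcases hcond i j with h | h
        · rw [h]; simp
        · rw [smul_smul, h]
      symm
      rw [hσd]
      calc ρ = ρ * 1 := (mul_one ρ).symm
        _ = ρ * ∑ i, vecMulVec (f i) (star (f i)) := by rw [hers_completeness f hf]
        _ = ∑ i, vecMulVec (ρ *ᵥ f i) (star (f i)) := by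
            rw [Finset.mul_sum]
            exact Finset.sum_congr rfl fun i _ => hers_mul_vmv ρ (f i) (star (f i))
        _ = ∑ i, (s i : ℂ) • vecMulVec (f i) (star (f i)) := by
            refine Finset.sum_congr rfl fun i _ => ?_
            rw [hfix i, hers_smul_vmv]
    · intro hσρ
      have hfix2 : ∀ i, ρ *ᵥ f i = (s i : ℂ) • f i := by
        intro i
        rw [← hσρ, hσv]
        rw [Finset.sum_eq_single i]
        · rw [hf i i]; simp
        · intro k _ hk; rw [hf k i]; simp [hk]
        · simp
      have hcond : ∀ i j, c i j = 0 ∨ r j = s i := by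
        intro i j
        by_cases hcz : c i j = 0
        · left; exact hcz
        · right
          have h1 : star (e j) ⬝ᵥ (ρ *ᵥ f i) = (r j : ℂ) * star (c i j) := by
            rw [hρv, hers_dot_sum]
            rw [Finset.sum_eq_single j]
            · rw [he j j, hconj]; simp
            · intro k _ hk
              rw [he j k]
              simp [hk.symm]
            · simp
          have h4 : (s i : ℂ) * star (c i j) = (r j : ℂ) * star (c i j) := by
            rw [← h1, hfix2 i, dotProduct_smul, hconj, smul_eq_mul]
          have h5 : (r j : ℂ) = (s i : ℂ) :=
            (mul_right_cancel₀ (star_ne_zero.mpr hcz) h4).symm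
          exact_mod_cast h5
      have hT0 : ∀ i j, T i j = 0 := by
        intro i j
        rcases hcond i j with h | h
        · have ha0 : a i j = 0 := by rw [ha]; simp only; rw [h]; simp
          rw [hT]; simp only; rw [ha0, zero_mul]
        · have hb : (s i - r j) - (r j * Real.log (s i) - r j * Real.log (r j)) = 0 := by
            rw [← h]; ring
          rw [hT]; simp only; rw [hb, mul_zero]
      have hXY : X = Y := by
        have h0 : ∑ i, ∑ j, T i j = 0 :=
          Finset.sum_eq_zero fun i _ => Finset.sum_eq_zero fun j _ => hT0 i j
        rw [hTsum] at h0; linarith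
      rw [hLHS, hRHS, hXY]
end

section
/- (Savage) Let {R_i}_{i=1}^n be a strictly proper scoring rule on n outcomes. Then its value function G(p) = Σ_{i=1}^n p_i R_i(p) is strictly convex on the probability simplex in ℝ^n. -/
/-! A strictly proper scoring rule makes `G(p)` the maximum over reports `q` of the expected score
`S q p = ∑ i, p i * R i q`, attained only at `q = p`. Each `S q` is linear in `p`, so at an interior
point `r = a • x + b • y` of a segment, `G r = a S r x + b S r y < a G x + b G y` because `r` is
neither endpoint. -/

/-- `S q p` is the expected score of the report `q` when the truth is `p`. -/
theorem StrictConvexOn.of_lt_apply_self {𝕜 E : Type*} [Field 𝕜] [LinearOrder 𝕜]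
    [IsStrictOrderedRing 𝕜] [AddCommGroup E] [Module 𝕜 E] {s : Set E} (hs : Convex 𝕜 s)
    (S : E → E →ₗ[𝕜] 𝕜) (hS : ∀ p ∈ s, ∀ q ∈ s, p ≠ q → S q p < S p p) :
    StrictConvexOn 𝕜 s (fun p => S p p) := by
  refine ⟨hs, fun x hx y hy hxy a b ha hb hab => ?_⟩
  set r := a • x + b • y
  have hr_mem : r ∈ openSegment 𝕜 x y := ⟨a, b, ha, hb, hab, rfl⟩
  have hxr : x ≠ r := fun h => hxy (left_mem_openSegment_iff.mp (h.symm ▸ hr_mem))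
  have hyr : y ≠ r := fun h => hxy (right_mem_openSegment_iff.mp (h.symm ▸ hr_mem))
  have hr : r ∈ s := hs.openSegment_subset hx hy hr_mem
  calc S r r = a * S r x + b * S r y := by simp only [r, map_add, map_smul, smul_eq_mul]
    _ < a * S x x + b * S y y := by
      gcongr
      · exact hS x hx r hr hxr
      · exact hS y hy r hr hyr

/-- Savage: the value function `G(p) = ∑ i, p i * R i p` of a strictly proper
scoring rule `{R i}` on `n` outcomes is strictly convex on the probability simplex in `ℝ^n`. -/
theorem stmt_2 {n : ℕ} (R : Fin n → (Fin n → ℝ) → ℝ)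
    (hproper : ∀ p ∈ stdSimplex ℝ (Fin n), ∀ q ∈ stdSimplex ℝ (Fin n),
      (∑ i, p i * R i q ≤ ∑ i, p i * R i p)
        ∧ ((∑ i, p i * R i q = ∑ i, p i * R i p) ↔ p = q)) :
    StrictConvexOn ℝ (stdSimplex ℝ (Fin n)) (fun p => ∑ i, p i * R i p) :=
  StrictConvexOn.of_lt_apply_self (convex_stdSimplex ℝ (Fin n))
    (fun q => (dotProductBilin ℝ ℝ).flip fun i => R i q)
    fun p hp q hq hpq => (hproper p hp q hq).1.lt_of_ne fun h => hpq ((hproper p hp q hq).2.mp h)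
end

section
/- Let {R_i}_{i=1}^n be a strictly proper scoring rule with value function G, extended to density matrices by G(ρ) = G(λ(ρ)) where λ(ρ) is the eigenvalue vector of ρ. Let σ be a density matrix on ℂ^n and let B = {|b_i⟩} be an orthonormal basis that diagonalizes σ. For any density matrix ρ, let p = (⟨b_i|ρ|b_i⟩)_i and s = (⟨b_i|σ|b_i⟩)_i (so s is the eigenvalue vector of σ in this basis). Then the expected reward Σ_i p_i R_i(s) satisfies Σ_i p_i R_i(s) ≤ G(ρ), with equality if and only if σ = ρ. In particular, reporting σ = ρ and being measured in an eigenbasis of the report uniquely maximizes the expected reward. -/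
open Matrix BigOperators ComplexOrder

-- completeness of an orthonormal family of n vectors in ℂⁿ
lemma my_complete {n : ℕ} (e : Fin n → (Fin n → ℂ))
    (he : ∀ i j, star (e i) ⬝ᵥ e j = if i = j then (1 : ℂ) else 0) :
    ∑ i, vecMulVec (e i) (star (e i)) = (1 : Matrix (Fin n) (Fin n) ℂ) := by
  set V : Matrix (Fin n) (Fin n) ℂ := Matrix.of fun k i => e i k with hV
  have h1 : Vᴴ * V = 1 := by
    ext i j
    have := he i j
    simp only [Matrix.mul_apply, conjTranspose_apply, hV, Matrix.of_apply, Matrix.one_apply]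
    simpa [dotProduct, Pi.star_apply] using this
  have h2 : V * Vᴴ = 1 := mul_eq_one_comm.mp h1
  ext k l
  have := congrFun (congrFun h2 k) l
  simp only [Matrix.mul_apply, conjTranspose_apply, hV, Matrix.of_apply] at this
  simpa [Matrix.sum_apply, vecMulVec_apply, Pi.star_apply] using this


lemma my_sum_mulVec {n m : ℕ} {ι : Type*} (t : Finset ι) (A : ι → Matrix (Fin n) (Fin m) ℂ) (y : Fin m → ℂ) :
    (∑ j ∈ t, A j) *ᵥ y = ∑ j ∈ t, (A j) *ᵥ y := by
  ext k
  simp only [Matrix.mulVec, dotProduct, Matrix.sum_apply, Finset.sum_apply,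
    Finset.sum_mul]
  exact Finset.sum_comm

lemma my_dot_sum {n : ℕ} {ι : Type*} (t : Finset ι) (x : Fin n → ℂ) (v : ι → Fin n → ℂ) :
    x ⬝ᵥ (∑ j ∈ t, v j) = ∑ j ∈ t, x ⬝ᵥ v j := by
  simp only [dotProduct, Finset.sum_apply, Finset.mul_sum]
  exact Finset.sum_comm

lemma my_vmv_mulVec {n : ℕ} (u v y : Fin n → ℂ) :
    vecMulVec u v *ᵥ y = (v ⬝ᵥ y) • u := by
  ext k
  simp only [Matrix.mulVec, vecMulVec_apply, dotProduct, Pi.smul_apply, smul_eq_mul,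
    Finset.sum_mul]
  exact Finset.sum_congr rfl fun l _ => by ring

lemma my_quad {n : ℕ} (c : Fin n → ℂ) (u v : Fin n → (Fin n → ℂ)) (x y : Fin n → ℂ) :
    x ⬝ᵥ (∑ j, c j • vecMulVec (u j) (v j)) *ᵥ y
      = ∑ j, c j * ((x ⬝ᵥ u j) * (v j ⬝ᵥ y)) := by
  rw [my_sum_mulVec, my_dot_sum]
  refine Finset.sum_congr rfl fun j _ => ?_
  rw [smul_mulVec, my_vmv_mulVec, dotProduct_smul, dotProduct_smul]
  simp only [smul_eq_mul]
  ring

lemma my_dot_conj {n : ℕ} (x y : Fin n → ℂ) :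
    star x ⬝ᵥ y = starRingEnd ℂ (star y ⬝ᵥ x) := by
  simp only [dotProduct, Pi.star_apply, map_sum, _root_.map_mul, RingHom.coe_coe]
  exact Finset.sum_congr rfl fun k _ => by
    simp [Complex.conj_conj, RCLike.star_def]; ring

lemma my_mul_vmv {n : ℕ} (A : Matrix (Fin n) (Fin n) ℂ) (w x : Fin n → ℂ) :
    A * vecMulVec w x = vecMulVec (A *ᵥ w) x := by
  ext i j
  simp only [Matrix.mul_apply, vecMulVec_apply, Matrix.mulVec, dotProduct,
    Finset.sum_mul]
  exact Finset.sum_congr rfl fun k _ => by ring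

lemma my_vmv_mul_vmv {n : ℕ} (u v w x : Fin n → ℂ) :
    vecMulVec u v * vecMulVec w x = (v ⬝ᵥ w) • vecMulVec u x := by
  ext i j
  simp only [Matrix.mul_apply, vecMulVec_apply, Matrix.smul_apply, dotProduct,
    smul_eq_mul, Finset.sum_mul]
  exact Finset.sum_congr rfl fun k _ => by ring

lemma my_trace_mul_vmv {n : ℕ} (A : Matrix (Fin n) (Fin n) ℂ) (u v : Fin n → ℂ) :
    (A * vecMulVec u v).trace = v ⬝ᵥ A *ᵥ u := by
  rw [my_mul_vmv]
  simp only [Matrix.trace, Matrix.diag, vecMulVec_apply, dotProduct]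
  exact Finset.sum_congr rfl fun k _ => by ring

-- diagonal entries of a decomposed matrix in its own basis
lemma my_diag {n : ℕ} (c : Fin n → ℝ) (b : Fin n → (Fin n → ℂ))
    (hb : ∀ i j, star (b i) ⬝ᵥ b j = if i = j then (1 : ℂ) else 0) (i : Fin n) :
    star (b i) ⬝ᵥ (∑ j, (c j : ℂ) • vecMulVec (b j) (star (b j))) *ᵥ b i = (c i : ℂ) := by
  rw [my_quad]
  rw [Finset.sum_eq_single i]
  · rw [hb i i]; simp
  · intro j _ hj
    rw [hb i j, if_neg (fun h => hj h.symm)]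
    ring
  · simp

-- trace of a decomposed matrix
lemma my_trace_decomp {n : ℕ} (c : Fin n → ℝ) (b : Fin n → (Fin n → ℂ))
    (hb : ∀ i j, star (b i) ⬝ᵥ b j = if i = j then (1 : ℂ) else 0) :
    (∑ j, (c j : ℂ) • vecMulVec (b j) (star (b j))).trace = ∑ j, (c j : ℂ) := by
  rw [Matrix.trace_sum]
  refine Finset.sum_congr rfl fun j _ => ?_
  rw [Matrix.trace_smul]
  have : (vecMulVec (b j) (star (b j))).trace = star (b j) ⬝ᵥ b j := by
    simp only [Matrix.trace, Matrix.diag, vecMulVec_apply, dotProduct, Pi.star_apply]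
    exact Finset.sum_congr rfl fun k _ => by ring
  rw [this, hb j j, if_pos rfl, smul_eq_mul, mul_one]

-- eigenvalues of a PSD trace-one decomposed matrix lie in the simplex
lemma my_simplex {n : ℕ} (σ : Matrix (Fin n) (Fin n) ℂ) (hσ : σ.PosSemidef) (hσtr : σ.trace = 1)
    (c : Fin n → ℝ) (b : Fin n → (Fin n → ℂ))
    (hb : ∀ i j, star (b i) ⬝ᵥ b j = if i = j then (1 : ℂ) else 0)
    (hσd : σ = ∑ j, (c j : ℂ) • vecMulVec (b j) (star (b j))) :
    c ∈ stdSimplex ℝ (Fin n) := by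
  constructor
  · intro i
    have h0 : (0 : ℂ) ≤ star (b i) ⬝ᵥ σ *ᵥ b i := hσ.dotProduct_mulVec_nonneg (b i)
    rw [hσd, my_diag c b hb i] at h0
    exact_mod_cast h0
  · have := hσtr
    rw [hσd, my_trace_decomp c b hb] at this
    have : ((∑ j, c j : ℝ) : ℂ) = 1 := by push_cast; exact this
    exact_mod_cast this

lemma my_key {n : ℕ} (R : Fin n → (Fin n → ℝ) → ℝ)
    (hproper : ∀ p ∈ stdSimplex ℝ (Fin n), ∀ q ∈ stdSimplex ℝ (Fin n),
      (∑ i, p i * R i q ≤ ∑ i, p i * R i p)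
        ∧ ((∑ i, p i * R i q = ∑ i, p i * R i p) ↔ p = q))
    (hGsymm : ∀ (τ : Equiv.Perm (Fin n)) (p : Fin n → ℝ),
      (∑ i, (p ∘ τ) i * R i (p ∘ τ)) = ∑ i, p i * R i p)
    (ρ : Matrix (Fin n) (Fin n) ℂ)
    (hρ : ρ.PosSemidef) (hρtr : ρ.trace = 1)
    (r : Fin n → ℝ) (e : Fin n → (Fin n → ℂ))
    (he : ∀ i j, star (e i) ⬝ᵥ e j = if i = j then (1 : ℂ) else 0)
    (hρd : ρ = ∑ i, (r i : ℂ) • vecMulVec (e i) (star (e i)))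
    (s : Fin n → ℝ) (hs : s ∈ stdSimplex ℝ (Fin n))
    (b : Fin n → (Fin n → ℂ))
    (hb : ∀ i j, star (b i) ⬝ᵥ b j = if i = j then (1 : ℂ) else 0) :
    (∑ i, (star (b i) ⬝ᵥ ρ.mulVec (b i)).re * R i s ≤ ∑ i, r i * R i r)
    ∧ ((∑ i, (star (b i) ⬝ᵥ ρ.mulVec (b i)).re * R i s = ∑ i, r i * R i r) →
        ρ = ∑ i, (s i : ℂ) • vecMulVec (b i) (star (b i))) := by
  have hr : r ∈ stdSimplex ℝ (Fin n) := my_simplex ρ hρ hρtr r e he hρd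
  have hce : ∑ i, vecMulVec (e i) (star (e i)) = (1 : Matrix (Fin n) (Fin n) ℂ) :=
    my_complete e he
  have hcb : ∑ i, vecMulVec (b i) (star (b i)) = (1 : Matrix (Fin n) (Fin n) ℂ) :=
    my_complete b hb
  set D : Matrix (Fin n) (Fin n) ℝ :=
    Matrix.of (fun i j => Complex.normSq (star (e j) ⬝ᵥ b i)) with hDdef
  set p : Fin n → ℝ := fun i => ∑ j, D i j * r j with hpdef
  -- diagonal entries of ρ in the b basis
  have hdiagb : ∀ i, star (b i) ⬝ᵥ ρ *ᵥ b i = ((p i : ℝ) : ℂ) := by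
    intro i
    rw [hρd, my_quad]
    push_cast [hpdef]
    refine Finset.sum_congr rfl fun j _ => ?_
    rw [my_dot_conj (b i) (e j)]
    rw [hDdef]
    simp only [Matrix.of_apply]
    rw [mul_comm (starRingEnd ℂ (star (e j) ⬝ᵥ b i)) (star (e j) ⬝ᵥ b i),
      Complex.mul_conj]
    norm_cast
    ring
  -- row sums of D
  have hrow : ∀ i, ∑ j, D i j = 1 := by
    intro i
    have h1 : star (b i) ⬝ᵥ (∑ j, ((1:ℂ)) • vecMulVec (e j) (star (e j))) *ᵥ b i
        = ∑ j, (1:ℂ) * ((star (b i) ⬝ᵥ e j) * (star (e j) ⬝ᵥ b i)) := my_quad _ _ _ _ _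
    simp only [one_smul, one_mul, hce] at h1
    rw [Matrix.one_mulVec, hb i i, if_pos rfl] at h1
    have h2 : ∀ j, (star (b i) ⬝ᵥ e j) * (star (e j) ⬝ᵥ b i) = ((D i j : ℝ) : ℂ) := by
      intro j
      rw [my_dot_conj (b i) (e j), mul_comm, Complex.mul_conj, hDdef]
      norm_cast
    rw [Finset.sum_congr rfl (fun j _ => h2 j)] at h1
    exact_mod_cast h1.symm
  -- column sums of D
  have hcol : ∀ j, ∑ i, D i j = 1 := by
    intro j
    have h1 : star (e j) ⬝ᵥ (∑ i, ((1:ℂ)) • vecMulVec (b i) (star (b i))) *ᵥ e j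
        = ∑ i, (1:ℂ) * ((star (e j) ⬝ᵥ b i) * (star (b i) ⬝ᵥ e j)) := my_quad _ _ _ _ _
    simp only [one_smul, one_mul, hcb] at h1
    rw [Matrix.one_mulVec, he j j, if_pos rfl] at h1
    have h2 : ∀ i, (star (e j) ⬝ᵥ b i) * (star (b i) ⬝ᵥ e j) = ((D i j : ℝ) : ℂ) := by
      intro i
      rw [my_dot_conj (b i) (e j), Complex.mul_conj, hDdef]
      norm_cast
    rw [Finset.sum_congr rfl (fun i _ => h2 i)] at h1
    exact_mod_cast h1.symm
  have hD : D ∈ doublyStochastic ℝ (Fin n) :=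
    mem_doublyStochastic_iff_sum.mpr
      ⟨fun i j => Complex.normSq_nonneg _, hrow, hcol⟩
  obtain ⟨w, hw0, hw1, hwD⟩ := exists_eq_sum_perm_of_mem_doublyStochastic hD
  -- p as a convex combination of permutations of r
  have hpτ : ∀ i, p i = ∑ τ : Equiv.Perm (Fin n), w τ * r (τ i) := by
    intro i
    rw [hpdef]
    simp only
    have hD' : ∀ j, D i j = ∑ τ : Equiv.Perm (Fin n), (if j = τ i then w τ else 0) := by
      intro j
      conv_lhs => rw [← hwD]
      simp [Matrix.sum_apply, Matrix.smul_apply, Equiv.Perm.permMatrix,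
        PEquiv.toMatrix_apply, Equiv.toPEquiv_apply, mul_ite, mul_one, mul_zero, eq_comm]
    rw [Finset.sum_congr rfl fun j _ => by rw [hD', Finset.sum_mul]]
    rw [Finset.sum_comm]
    refine Finset.sum_congr rfl fun τ _ => ?_
    simp [ite_mul, Finset.sum_ite_eq']
  have hp_mem : p ∈ stdSimplex ℝ (Fin n) := by
    constructor
    · intro i
      exact Finset.sum_nonneg fun j _ =>
        mul_nonneg (Complex.normSq_nonneg _) (hr.1 j)
    · rw [hpdef]
      simp only
      rw [Finset.sum_comm]
      have : ∀ j, ∑ i, D i j * r j = r j := by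
        intro j; rw [← Finset.sum_mul, hcol j, one_mul]
      rw [Finset.sum_congr rfl fun j _ => this j]
      exact hr.2
  have hq_mem : ∀ τ : Equiv.Perm (Fin n), (r ∘ τ) ∈ stdSimplex ℝ (Fin n) := by
    intro τ
    refine ⟨fun i => hr.1 (τ i), ?_⟩
    simpa using (Equiv.sum_comp τ r).trans hr.2
  have hS_le : ∀ τ : Equiv.Perm (Fin n),
      ∑ i, (r ∘ τ) i * R i p ≤ ∑ i, r i * R i r := by
    intro τ
    calc ∑ i, (r ∘ τ) i * R i p ≤ ∑ i, (r ∘ τ) i * R i (r ∘ τ) :=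
          (hproper (r ∘ τ) (hq_mem τ) p hp_mem).1
      _ = ∑ i, r i * R i r := hGsymm τ r
  have hGp_eq : ∑ i, p i * R i p
      = ∑ τ : Equiv.Perm (Fin n), w τ * ∑ i, (r ∘ τ) i * R i p := by
    calc ∑ i, p i * R i p
        = ∑ i, ∑ τ : Equiv.Perm (Fin n), w τ * ((r ∘ τ) i * R i p) := by
          refine Finset.sum_congr rfl fun i _ => ?_
          rw [hpτ i, Finset.sum_mul]
          exact Finset.sum_congr rfl fun τ _ => by rw [Function.comp_apply, mul_assoc]
      _ = _ := by
          rw [Finset.sum_comm]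
          exact Finset.sum_congr rfl fun τ _ => by rw [Finset.mul_sum]
  have hGr_eq : ∑ i, r i * R i r
      = ∑ τ : Equiv.Perm (Fin n), w τ * ∑ i, r i * R i r := by
    rw [← Finset.sum_mul, hw1, one_mul]
  have hGp_le : ∑ i, p i * R i p ≤ ∑ i, r i * R i r := by
    rw [hGp_eq, hGr_eq]
    exact Finset.sum_le_sum fun τ _ => mul_le_mul_of_nonneg_left (hS_le τ) (hw0 τ)
  have hA_le : ∑ i, p i * R i s ≤ ∑ i, p i * R i p := (hproper p hp_mem s hs).1
  have hre : ∀ i, (star (b i) ⬝ᵥ ρ *ᵥ b i).re = p i := fun i => by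
    rw [hdiagb i]; exact Complex.ofReal_re _
  have hlhs : ∑ i, (star (b i) ⬝ᵥ ρ *ᵥ b i).re * R i s = ∑ i, p i * R i s :=
    Finset.sum_congr rfl fun i _ => by rw [hre i]
  constructor
  · rw [hlhs]; exact le_trans hA_le hGp_le
  · intro hEqtot
    have hEq : ∑ i, p i * R i s = ∑ i, r i * R i r := by rw [← hlhs]; exact hEqtot
    have e1 : ∑ i, p i * R i s = ∑ i, p i * R i p :=
      le_antisymm hA_le (by rw [hEq]; exact hGp_le)
    have hps : p = s := ((hproper p hp_mem s hs).2).mp e1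
    have e2 : ∑ i, p i * R i p = ∑ i, r i * R i r := by rw [← e1, hEq]
    have hterm : ∀ τ : Equiv.Perm (Fin n),
        w τ * (∑ i, r i * R i r) - w τ * ∑ i, (r ∘ τ) i * R i p = 0 := by
      have hsum0 : ∑ τ : Equiv.Perm (Fin n),
          (w τ * (∑ i, r i * R i r) - w τ * ∑ i, (r ∘ τ) i * R i p) = 0 := by
        rw [Finset.sum_sub_distrib, ← hGp_eq, ← hGr_eq, e2, sub_self]
      have := (Finset.sum_eq_zero_iff_of_nonneg (fun τ _ =>
        sub_nonneg.mpr (mul_le_mul_of_nonneg_left (hS_le τ) (hw0 τ)))).mp hsum0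
      exact fun τ => this τ (Finset.mem_univ τ)
    obtain ⟨τ₀, hτ₀⟩ : ∃ τ₀ : Equiv.Perm (Fin n), 0 < w τ₀ := by
      by_contra hno
      push_neg at hno
      have : ∑ τ : Equiv.Perm (Fin n), w τ = 0 :=
        Finset.sum_eq_zero fun τ _ => le_antisymm (hno τ) (hw0 τ)
      rw [hw1] at this
      exact one_ne_zero this
    have hA0 : ∑ i, (r ∘ τ₀) i * R i p = ∑ i, r i * R i r :=
      mul_left_cancel₀ (ne_of_gt hτ₀) (by linarith [hterm τ₀])
    have hA0' : ∑ i, (r ∘ τ₀) i * R i p = ∑ i, (r ∘ τ₀) i * R i (r ∘ τ₀) := by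
      rw [hA0, ← hGsymm τ₀ r]
    have hrp : r ∘ τ₀ = p := ((hproper (r ∘ τ₀) (hq_mem τ₀) p hp_mem).2).mp hA0'
    -- sum of squares of p equals that of r
    have hsq : ∑ i, p i ^ 2 = ∑ i, r i ^ 2 := by
      rw [← hrp]
      simpa using Equiv.sum_comp τ₀ (fun j => r j ^ 2)
    -- trace of ρ²
    have htr2 : (ρ * ρ).trace = ((∑ j, r j ^ 2 : ℝ) : ℂ) := by
      have hexp : ρ * ρ = ∑ j, (r j : ℂ) • (ρ * vecMulVec (e j) (star (e j))) := by
        conv_lhs => rw [show ρ * ρ = ρ * (∑ j, (r j : ℂ) • vecMulVec (e j) (star (e j))) from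
          by rw [← hρd]]
        rw [Finset.mul_sum]
        exact Finset.sum_congr rfl fun j _ => Matrix.mul_smul _ _ _
      rw [hexp, Matrix.trace_sum]
      push_cast
      refine Finset.sum_congr rfl fun j _ => ?_
      rw [Matrix.trace_smul, my_trace_mul_vmv, hρd, my_diag r e he j]
      rw [smul_eq_mul]
      ring
    set M : Matrix (Fin n) (Fin n) ℂ :=
      Matrix.of (fun i j => star (b i) ⬝ᵥ ρ *ᵥ b j) with hM
    have hMsym : ∀ i j, starRingEnd ℂ (M i j) = M j i := by
      intro i j
      rw [hM]
      simp only [Matrix.of_apply]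
      rw [my_dot_conj (b i) (ρ *ᵥ b j)]
      simp only [starRingEnd_apply, star_star]
      rw [Matrix.star_mulVec, hρ.1]
      rw [← Matrix.dotProduct_mulVec]
    have hMdiag : ∀ i, M i i = ((p i : ℝ) : ℂ) := fun i => hdiagb i
    have hfro : ∑ i, ∑ j, M i j * M j i = (ρ * ρ).trace := by
      have hinner : ∀ i, ∑ j, M i j * M j i = star (b i) ⬝ᵥ (ρ * ρ) *ᵥ b i := by
        intro i
        calc ∑ j, M i j * M j i
            = ∑ j, (1 : ℂ) * (((star (b i) ᵥ* ρ) ⬝ᵥ b j) * (star (b j) ⬝ᵥ (ρ *ᵥ b i))) := by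
              refine Finset.sum_congr rfl fun j _ => ?_
              rw [one_mul, ← Matrix.dotProduct_mulVec]
              rfl
          _ = (star (b i) ᵥ* ρ) ⬝ᵥ (∑ j, (1:ℂ) • vecMulVec (b j) (star (b j))) *ᵥ (ρ *ᵥ b i) :=
              (my_quad _ _ _ _ _).symm
          _ = star (b i) ⬝ᵥ (ρ * ρ) *ᵥ b i := by
              simp only [one_smul, hcb]
              rw [Matrix.one_mulVec, ← Matrix.dotProduct_mulVec, Matrix.mulVec_mulVec]
      rw [Finset.sum_congr rfl fun i _ => hinner i]
      have : ∀ i, star (b i) ⬝ᵥ (ρ * ρ) *ᵥ b i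
          = ((ρ * ρ) * vecMulVec (b i) (star (b i))).trace := fun i =>
        (my_trace_mul_vmv _ _ _).symm
      rw [Finset.sum_congr rfl fun i _ => this i, ← Matrix.trace_sum, ← Finset.mul_sum, hcb,
        Matrix.mul_one]
    have hfro' : ∑ i, ∑ j, Complex.normSq (M i j) = ∑ j, r j ^ 2 := by
      have hcast : ((∑ i, ∑ j, Complex.normSq (M i j) : ℝ) : ℂ)
          = ∑ i, ∑ j, M i j * M j i := by
        push_cast
        refine Finset.sum_congr rfl fun i _ => Finset.sum_congr rfl fun j _ => ?_
        rw [← hMsym i j, Complex.mul_conj]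
      have : ((∑ i, ∑ j, Complex.normSq (M i j) : ℝ) : ℂ) = ((∑ j, r j ^ 2 : ℝ) : ℂ) := by
        rw [hcast, hfro, htr2]
      exact_mod_cast this
    have hdiag_sq : ∀ i, Complex.normSq (M i i) = p i ^ 2 := fun i => by
      rw [hMdiag i, Complex.normSq_ofReal]; ring
    have hoffsum : ∑ i, ∑ j ∈ Finset.univ.erase i, Complex.normSq (M i j) = 0 := by
      have hsplit : ∀ i : Fin n, ∑ j, Complex.normSq (M i j)
          = Complex.normSq (M i i) + ∑ j ∈ Finset.univ.erase i, Complex.normSq (M i j) :=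
        fun i => (Finset.add_sum_erase _ _ (Finset.mem_univ i)).symm
      have h4 := hfro'
      rw [Finset.sum_congr rfl fun i _ => hsplit i, Finset.sum_add_distrib] at h4
      have h3 : ∑ i, Complex.normSq (M i i) = ∑ j, r j ^ 2 := by
        rw [Finset.sum_congr rfl fun i _ => hdiag_sq i]; exact hsq
      linarith
    have hoff : ∀ i j, j ≠ i → M i j = 0 := by
      intro i j hij
      have h0 := (Finset.sum_eq_zero_iff_of_nonneg (fun i _ =>
        Finset.sum_nonneg fun j _ => Complex.normSq_nonneg _)).mp hoffsum i (Finset.mem_univ i)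
      have h1 := (Finset.sum_eq_zero_iff_of_nonneg (fun j _ =>
        Complex.normSq_nonneg _)).mp h0 j (Finset.mem_erase.mpr ⟨hij, Finset.mem_univ j⟩)
      exact Complex.normSq_eq_zero.mp h1
    have hrec : ρ = ∑ i, ((p i : ℝ) : ℂ) • vecMulVec (b i) (star (b i)) := by
      conv_lhs => rw [show ρ = (∑ i, vecMulVec (b i) (star (b i))) * ρ *
        (∑ j, vecMulVec (b j) (star (b j))) from by rw [hcb, Matrix.one_mul, Matrix.mul_one]]
      rw [Finset.sum_mul, Finset.sum_mul]
      refine Finset.sum_congr rfl fun i _ => ?_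
      rw [Finset.mul_sum]
      rw [Finset.sum_eq_single i]
      · rw [mul_assoc, my_mul_vmv, my_vmv_mul_vmv, ← hMdiag i]
        rfl
      · intro j _ hj
        rw [mul_assoc, my_mul_vmv, my_vmv_mul_vmv]
        have : star (b i) ⬝ᵥ ρ *ᵥ b j = 0 := hoff i j hj
        rw [this, zero_smul]
      · simp
    rw [hps] at hrec
    exact hrec

/-- Let `{R i}` be a strictly proper scoring rule with (permutation-invariant)
value function `G(p) = ∑ i, p i * R i p`, extended to density matrices via eigenvalues.
Let `σ = ∑ i, s i • |b i⟩⟨b i|` be a density matrix diagonalized by the orthonormal basis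
`b`, and let `ρ = ∑ j, r j • |e j⟩⟨e j|` be any density matrix.  With
`p i = ⟨b i|ρ|b i⟩`, the expected reward satisfies
`∑ i, p i * R i s ≤ G(λ(ρ)) = ∑ i, r i * R i r`, with equality if and only if `σ = ρ`. -/
theorem stmt_4 {n : ℕ} (R : Fin n → (Fin n → ℝ) → ℝ)
    (hproper : ∀ p ∈ stdSimplex ℝ (Fin n), ∀ q ∈ stdSimplex ℝ (Fin n),
      (∑ i, p i * R i q ≤ ∑ i, p i * R i p)
        ∧ ((∑ i, p i * R i q = ∑ i, p i * R i p) ↔ p = q))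
    (hGsymm : ∀ (τ : Equiv.Perm (Fin n)) (p : Fin n → ℝ),
      (∑ i, (p ∘ τ) i * R i (p ∘ τ)) = ∑ i, p i * R i p)
    (ρ σ : Matrix (Fin n) (Fin n) ℂ)
    (hρ : ρ.PosSemidef) (hρtr : ρ.trace = 1)
    (hσ : σ.PosSemidef) (hσtr : σ.trace = 1)
    (r : Fin n → ℝ) (e : Fin n → (Fin n → ℂ))
    (he : ∀ i j, star (e i) ⬝ᵥ e j = if i = j then (1 : ℂ) else 0)
    (hρd : ρ = ∑ i, (r i : ℂ) • vecMulVec (e i) (star (e i)))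
    (s : Fin n → ℝ) (b : Fin n → (Fin n → ℂ))
    (hb : ∀ i j, star (b i) ⬝ᵥ b j = if i = j then (1 : ℂ) else 0)
    (hσd : σ = ∑ i, (s i : ℂ) • vecMulVec (b i) (star (b i))) :
    (∑ i, (star (b i) ⬝ᵥ ρ.mulVec (b i)).re * R i s ≤ ∑ i, r i * R i r)
    ∧ ((∑ i, (star (b i) ⬝ᵥ ρ.mulVec (b i)).re * R i s = ∑ i, r i * R i r) ↔ σ = ρ) := by
  have hs_mem : s ∈ stdSimplex ℝ (Fin n) := my_simplex σ hσ hσtr s b hb hσd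
  have hr_mem : r ∈ stdSimplex ℝ (Fin n) := my_simplex ρ hρ hρtr r e he hρd
  obtain ⟨hle, heqimp⟩ := my_key R hproper hGsymm ρ hρ hρtr r e he hρd s hs_mem b hb
  refine ⟨hle, ⟨fun h => by rw [hσd, ← heqimp h], fun hσρ => ?_⟩⟩
  have hdb : ∀ i, star (b i) ⬝ᵥ ρ *ᵥ b i = ((s i : ℝ) : ℂ) := by
    intro i; rw [← hσρ, hσd]; exact my_diag s b hb i
  have hlhs : ∑ i, (star (b i) ⬝ᵥ ρ *ᵥ b i).re * R i s = ∑ i, s i * R i s :=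
    Finset.sum_congr rfl fun i _ => by rw [hdb i, Complex.ofReal_re]
  obtain ⟨hle2, _⟩ := my_key R hproper hGsymm σ hσ hσtr s b hb hσd r hr_mem e he
  have hde : ∀ i, star (e i) ⬝ᵥ σ *ᵥ e i = ((r i : ℝ) : ℂ) := by
    intro i; rw [hσρ, hρd]; exact my_diag r e he i
  have hlhs2 : ∑ i, (star (e i) ⬝ᵥ σ *ᵥ e i).re * R i r = ∑ i, r i * R i r :=
    Finset.sum_congr rfl fun i _ => by rw [hde i, Complex.ofReal_re]
  rw [hlhs]
  rw [hlhs] at hle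
  rw [hlhs2] at hle2
  linarith
end

section
/- Let {R_i}_{i=1}^n be a strictly proper scoring rule with value function G, extended to density matrices by G(ρ) = G(λ(ρ)). Suppose that to each density matrix σ on ℂ^n a measurement basis is assigned via a map σ ↦ B(σ), an orthonormal basis of ℂ^n, and suppose there exists a density matrix σ₀ that is NOT diagonal in the basis B(σ₀). Let β denote the pinching map in basis B(σ₀) (the channel that zeroes all off-diagonal matrix entries in that basis) and set ρ = β(σ₀) ≠ σ₀. Then the expected reward for reporting σ₀ when the true state is ρ, namely Σ_i ⟨b_i|ρ|b_i⟩ R_i( (⟨b_i|σ₀|b_i⟩)_i ) with {|b_i⟩} = B(σ₀), equals G(ρ), while the expected reward for truthfully reporting ρ is G(diag_{B(ρ)}(ρ)) ≤ G(ρ). Hence reporting the false state σ₀ yields at least as large an expected reward as reporting the true state ρ, so honesty is not strictly enforced. -/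
open Matrix BigOperators ComplexOrder

lemma ortho_complete {n : ℕ} (b : Fin n → (Fin n → ℂ))
    (hb : ∀ i j, star (b i) ⬝ᵥ b j = if i = j then (1 : ℂ) else 0) :
    ∑ i, vecMulVec (b i) (star (b i)) = (1 : Matrix (Fin n) (Fin n) ℂ) := by
  set U : Matrix (Fin n) (Fin n) ℂ := Matrix.of fun k i => b i k with hU
  have h1 : Uᴴ * U = 1 := by
    ext i j
    simpa [Matrix.mul_apply, hU, dotProduct, Matrix.one_apply] using hb i j
  have h2 : U * Uᴴ = 1 := mul_eq_one_comm.mp h1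
  ext k l
  have := congrFun (congrFun h2 k) l
  simpa [Matrix.mul_apply, hU, vecMulVec_apply, Matrix.sum_apply, mul_comm] using this

lemma dot_sum_vecMulVec {n : ℕ} (s : Fin n → ℝ) (b : Fin n → (Fin n → ℂ)) (v w : Fin n → ℂ) :
    star v ⬝ᵥ (∑ i, (s i : ℂ) • vecMulVec (b i) (star (b i))).mulVec w
      = ∑ i, (s i : ℂ) * ((star v ⬝ᵥ b i) * (star (b i) ⬝ᵥ w)) := by
  simp only [dotProduct, mulVec, Matrix.sum_apply, Matrix.smul_apply, vecMulVec_apply,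
    smul_eq_mul, Pi.star_apply, dotProduct, Finset.mul_sum, Finset.sum_mul]
  rw [show (∑ x : Fin n, ∑ x_1 : Fin n, ∑ i : Fin n,
      star (v x) * ((s i : ℂ) * (b i x * star (b i x_1)) * w x_1))
    = ∑ x : Fin n, ∑ i : Fin n, ∑ x_1 : Fin n,
      star (v x) * ((s i : ℂ) * (b i x * star (b i x_1)) * w x_1)
    from Finset.sum_congr rfl fun _ _ => Finset.sum_comm]
  rw [Finset.sum_comm]
  refine Finset.sum_congr rfl fun i _ => ?_
  rw [Finset.sum_comm]
  exact Finset.sum_congr rfl fun l _ => Finset.sum_congr rfl fun k _ => by ring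

lemma dot_eq_trace {n : ℕ} (M : Matrix (Fin n) (Fin n) ℂ) (u : Fin n → ℂ) :
    star u ⬝ᵥ M.mulVec u = (M * vecMulVec u (star u)).trace := by
  simp only [Matrix.trace, Matrix.diag, Matrix.mul_apply, vecMulVec_apply, dotProduct, mulVec,
    Pi.star_apply, dotProduct, Finset.mul_sum]
  exact Finset.sum_congr rfl fun k _ => Finset.sum_congr rfl fun l _ => by ring

lemma ortho_expand {n : ℕ} (b : Fin n → (Fin n → ℂ))
    (hb : ∀ i j, star (b i) ⬝ᵥ b j = if i = j then (1 : ℂ) else 0) (v w : Fin n → ℂ) :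
    ∑ i, (star v ⬝ᵥ b i) * (star (b i) ⬝ᵥ w) = star v ⬝ᵥ w := by
  have h := dot_sum_vecMulVec (fun _ => (1 : ℝ)) b v w
  simp only [Complex.ofReal_one, one_smul, one_mul] at h
  rw [← h, ortho_complete b hb, Matrix.one_mulVec]

lemma star_dot_comm {n : ℕ} (v w : Fin n → ℂ) :
    star v ⬝ᵥ w = starRingEnd ℂ (star w ⬝ᵥ v) := by
  simp [dotProduct, map_sum, mul_comm]

/-- Let `{R i}` be a strictly proper scoring rule with (permutation-invariant)
value function `G(p) = ∑ i, p i * R i p`, extended to density matrices via eigenvalues.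
Suppose each density matrix `σ` is assigned a measurement orthonormal basis `B σ`, and
suppose `σ₀` is a density matrix that is NOT diagonal in the basis `B σ₀`, i.e. the
pinching `ρ = β(σ₀) = ∑ i, ⟨b i|σ₀|b i⟩ • |b i⟩⟨b i|` (with `b = B σ₀`) differs from `σ₀`.
Then the expected reward for reporting `σ₀` when the true state is `ρ` equals
`G(ρ) = ∑ i, s i * R i s`, while the expected reward for truthfully reporting `ρ` is
`G(diag_{B ρ}(ρ)) ≤ G(ρ)`; hence lying pays at least as much as honesty. -/
theorem stmt_5 {n : ℕ} (R : Fin n → (Fin n → ℝ) → ℝ)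
    (hproper : ∀ p ∈ stdSimplex ℝ (Fin n), ∀ q ∈ stdSimplex ℝ (Fin n),
      (∑ i, p i * R i q ≤ ∑ i, p i * R i p)
        ∧ ((∑ i, p i * R i q = ∑ i, p i * R i p) ↔ p = q))
    (hGsymm : ∀ (τ : Equiv.Perm (Fin n)) (p : Fin n → ℝ),
      (∑ i, (p ∘ τ) i * R i (p ∘ τ)) = ∑ i, p i * R i p)
    (B : Matrix (Fin n) (Fin n) ℂ → (Fin n → (Fin n → ℂ)))
    (hB : ∀ σ : Matrix (Fin n) (Fin n) ℂ, σ.PosSemidef → σ.trace = 1 →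
      ∀ i j, star (B σ i) ⬝ᵥ B σ j = if i = j then (1 : ℂ) else 0)
    (σ₀ : Matrix (Fin n) (Fin n) ℂ) (hσ₀ : σ₀.PosSemidef) (hσ₀tr : σ₀.trace = 1)
    (s : Fin n → ℝ)
    (hs : ∀ i, (s i : ℂ) = star (B σ₀ i) ⬝ᵥ σ₀.mulVec (B σ₀ i))
    (ρ : Matrix (Fin n) (Fin n) ℂ)
    (hρd : ρ = ∑ i, (s i : ℂ) • vecMulVec (B σ₀ i) (star (B σ₀ i)))
    (hne : ρ ≠ σ₀) :
    (∑ i, (star (B σ₀ i) ⬝ᵥ ρ.mulVec (B σ₀ i)).re * R i s = ∑ i, s i * R i s)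
    ∧ (∑ i, (star (B ρ i) ⬝ᵥ ρ.mulVec (B ρ i)).re
          * R i (fun j => (star (B ρ j) ⬝ᵥ ρ.mulVec (B ρ j)).re)
        ≤ ∑ i, s i * R i s)
    ∧ (∑ i, (star (B ρ i) ⬝ᵥ ρ.mulVec (B ρ i)).re
          * R i (fun j => (star (B ρ j) ⬝ᵥ ρ.mulVec (B ρ j)).re)
        ≤ ∑ i, (star (B σ₀ i) ⬝ᵥ ρ.mulVec (B σ₀ i)).re * R i s) := by
  have hb := hB σ₀ hσ₀ hσ₀tr
  set b := B σ₀ with hbdef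
  -- dot products through ρ
  have hdot : ∀ v w, star v ⬝ᵥ ρ.mulVec w
      = ∑ i, (s i : ℂ) * ((star v ⬝ᵥ b i) * (star (b i) ⬝ᵥ w)) := by
    intro v w; rw [hρd]; exact dot_sum_vecMulVec s b v w
  -- diagonal of ρ in basis b is s
  have hdiag : ∀ i, star (b i) ⬝ᵥ ρ.mulVec (b i) = (s i : ℂ) := by
    intro i
    rw [hdot]
    rw [Finset.sum_eq_single i]
    · simp [hb]
    · intro j _ hj; simp [hb, (Ne.symm hj), hj]
    · simp
  -- part 1
  have part1 : ∑ i, (star (b i) ⬝ᵥ ρ.mulVec (b i)).re * R i s = ∑ i, s i * R i s :=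
    Finset.sum_congr rfl fun i _ => by rw [hdiag i, Complex.ofReal_re]
  -- s is a probability vector
  have hsnn : ∀ i, 0 ≤ s i := by
    intro i
    have h := hσ₀.dotProduct_mulVec_nonneg (b i)
    rw [← hs i] at h
    exact Complex.zero_le_real.mp h
  have hsumC : (∑ i, (s i : ℂ)) = 1 := by
    calc ∑ i, (s i : ℂ) = ∑ i, (σ₀ * vecMulVec (b i) (star (b i))).trace := by
          refine Finset.sum_congr rfl fun i _ => ?_
          rw [hs i, dot_eq_trace]
      _ = (σ₀ * ∑ i, vecMulVec (b i) (star (b i))).trace := by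
          rw [Matrix.mul_sum, Matrix.trace_sum]
      _ = 1 := by rw [ortho_complete b hb, mul_one, hσ₀tr]
  have hsum : (∑ i, s i) = 1 := by exact_mod_cast hsumC
  have hsmem : s ∈ stdSimplex ℝ (Fin n) := ⟨hsnn, hsum⟩
  -- ρ is a density matrix
  have hρherm : ρ.IsHermitian := by
    rw [hρd]
    unfold Matrix.IsHermitian
    ext k l
    simp only [conjTranspose_apply, Matrix.sum_apply, Matrix.smul_apply, vecMulVec_apply,
      smul_eq_mul, star_sum, star_mul', Pi.star_apply, star_star, Complex.star_def,
      Complex.conj_ofReal, Complex.conj_conj]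
    exact Finset.sum_congr rfl fun i _ => by ring
  have hρpsd : ρ.PosSemidef := by
    refine Matrix.PosSemidef.of_dotProduct_mulVec_nonneg hρherm fun x => ?_
    rw [hdot]
    apply Finset.sum_nonneg
    intro i _
    rw [star_dot_comm x (b i), ← Complex.normSq_eq_conj_mul_self,
      ← Complex.ofReal_mul]
    exact Complex.zero_le_real.mpr (mul_nonneg (hsnn i) (Complex.normSq_nonneg _))
  have key : ∀ (r : ℝ) (c : ℂ), (r : ℂ) * (starRingEnd ℂ c * c)
      = ((r * Complex.normSq c : ℝ) : ℂ) := by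
    intro r c
    rw [← Complex.normSq_eq_conj_mul_self]
    push_cast
    ring
  have hρtr : ρ.trace = 1 := by
    have h : ∑ i, star (b i) ⬝ᵥ ρ.mulVec (b i) = ρ.trace := by
      calc ∑ i, star (b i) ⬝ᵥ ρ.mulVec (b i)
          = ∑ i, (ρ * vecMulVec (b i) (star (b i))).trace :=
            Finset.sum_congr rfl fun i _ => dot_eq_trace ρ (b i)
        _ = (ρ * ∑ i, vecMulVec (b i) (star (b i))).trace := by
            rw [Matrix.mul_sum, Matrix.trace_sum]
        _ = ρ.trace := by rw [ortho_complete b hb, mul_one]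
    rw [← h, show ∑ i, star (b i) ⬝ᵥ ρ.mulVec (b i) = ∑ i, (s i : ℂ) from
      Finset.sum_congr rfl fun i _ => hdiag i, hsumC]
  have hb' := hB ρ hρpsd hρtr
  set b' := B ρ with hb'def
  -- the diagonal of ρ in basis b'
  set t : Fin n → ℝ := fun j => (star (b' j) ⬝ᵥ ρ.mulVec (b' j)).re with htdef
  set D : Matrix (Fin n) (Fin n) ℝ :=
    Matrix.of (fun j i => Complex.normSq (star (b i) ⬝ᵥ b' j)) with hDdef
  have hcross : ∀ j i, star (b' j) ⬝ᵥ b i = starRingEnd ℂ (star (b i) ⬝ᵥ b' j) :=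
    fun j i => star_dot_comm _ _
  have htD : ∀ j, t j = ∑ i, D j i * s i := by
    intro j
    have hc : star (b' j) ⬝ᵥ ρ.mulVec (b' j) = ((∑ i, D j i * s i : ℝ) : ℂ) := by
      rw [hdot]
      rw [Complex.ofReal_sum]
      refine Finset.sum_congr rfl fun i _ => ?_
      rw [hcross j i, key (s i) _]
      norm_cast
      simp only [hDdef, Matrix.of_apply]
      ring
    rw [htdef]
    simp only [hc, Complex.ofReal_re]
  have hDmem : D ∈ doublyStochastic ℝ (Fin n) := by
    rw [mem_doublyStochastic_iff_sum]
    refine ⟨fun i j => Complex.normSq_nonneg _, fun j => ?_, fun i => ?_⟩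
    · -- row sum
      have : ((∑ i, D j i : ℝ) : ℂ) = 1 := by
        rw [Complex.ofReal_sum]
        calc ∑ i, ((D j i : ℝ) : ℂ)
            = ∑ i, (star (b' j) ⬝ᵥ b i) * (star (b i) ⬝ᵥ b' j) := by
              refine Finset.sum_congr rfl fun i _ => ?_
              simp only [hDdef, Matrix.of_apply]
              rw [hcross j i]
              exact Complex.normSq_eq_conj_mul_self
          _ = star (b' j) ⬝ᵥ b' j := ortho_expand b hb _ _
          _ = 1 := by rw [hb' j j]; simp
      exact_mod_cast this
    · -- column sum
      have : ((∑ j, D j i : ℝ) : ℂ) = 1 := by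
        rw [Complex.ofReal_sum]
        calc ∑ j, ((D j i : ℝ) : ℂ)
            = ∑ j, (star (b i) ⬝ᵥ b' j) * (star (b' j) ⬝ᵥ b i) := by
              refine Finset.sum_congr rfl fun j _ => ?_
              simp only [hDdef, Matrix.of_apply]
              rw [hcross j i]
              exact (Complex.mul_conj _).symm
          _ = star (b i) ⬝ᵥ b i := ortho_expand b' hb' _ _
          _ = 1 := by rw [hb i i]; simp
      exact_mod_cast this
  obtain ⟨w, hw0, hw1, hwD⟩ := exists_eq_sum_perm_of_mem_doublyStochastic hDmem
  have hDentry : ∀ j i, D j i = ∑ τ : Equiv.Perm (Fin n), w τ * (τ.permMatrix ℝ) j i := by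
    intro j i
    rw [← hwD]
    simp [Matrix.sum_apply]
  have hperm_entry : ∀ (τ : Equiv.Perm (Fin n)) j i,
      (τ.permMatrix ℝ) j i = if τ j = i then 1 else 0 := by
    intro τ j i
    simp [Equiv.Perm.permMatrix, PEquiv.toMatrix_apply, Equiv.toPEquiv_apply]

  have ht_perm : ∀ j, t j = ∑ τ : Equiv.Perm (Fin n), w τ * s (τ j) := by
    intro j
    rw [htD]
    calc ∑ i, D j i * s i
        = ∑ i, ∑ τ : Equiv.Perm (Fin n), w τ * ((τ.permMatrix ℝ) j i * s i) := by
          refine Finset.sum_congr rfl fun i _ => ?_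
          rw [hDentry j i, Finset.sum_mul]
          exact Finset.sum_congr rfl fun τ _ => by ring
      _ = ∑ τ : Equiv.Perm (Fin n), ∑ i, w τ * ((τ.permMatrix ℝ) j i * s i) :=
          Finset.sum_comm
      _ = ∑ τ : Equiv.Perm (Fin n), w τ * s (τ j) := by
          refine Finset.sum_congr rfl fun τ _ => ?_
          rw [← Finset.mul_sum]
          congr 1
          simp [hperm_entry τ j, Equiv.toPEquiv_apply]
  -- t is a probability vector
  have htnn : ∀ j, 0 ≤ t j := by
    intro j
    rw [ht_perm j]
    exact Finset.sum_nonneg fun τ _ => mul_nonneg (hw0 τ) (hsnn _)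
  have htsum : ∑ j, t j = 1 := by
    calc ∑ j, t j = ∑ τ : Equiv.Perm (Fin n), ∑ j, w τ * s (τ j) := by
          rw [← Finset.sum_comm]
          exact Finset.sum_congr rfl fun j _ => ht_perm j
      _ = ∑ τ : Equiv.Perm (Fin n), w τ := by
          refine Finset.sum_congr rfl fun τ _ => ?_
          rw [← Finset.mul_sum, Equiv.sum_comp τ s, hsum, mul_one]
      _ = 1 := hw1
  have htmem : t ∈ stdSimplex ℝ (Fin n) := ⟨htnn, htsum⟩
  have hsτmem : ∀ τ : Equiv.Perm (Fin n), s ∘ τ ∈ stdSimplex ℝ (Fin n) := by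
    intro τ
    exact ⟨fun i => hsnn _, by rw [show ∑ i, (s ∘ τ) i = ∑ i, s (τ i) from rfl,
      Equiv.sum_comp τ s, hsum]⟩
  -- main inequality
  have part2 : ∑ i, t i * R i t ≤ ∑ i, s i * R i s := by
    calc ∑ i, t i * R i t
        = ∑ i, ∑ τ : Equiv.Perm (Fin n), w τ * (s (τ i) * R i t) := by
          refine Finset.sum_congr rfl fun i _ => ?_
          rw [ht_perm i, Finset.sum_mul]
          exact Finset.sum_congr rfl fun τ _ => by ring
      _ = ∑ τ : Equiv.Perm (Fin n), w τ * ∑ i, (s ∘ τ) i * R i t := by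
          rw [Finset.sum_comm]
          exact Finset.sum_congr rfl fun τ _ => by rw [Finset.mul_sum]; rfl
      _ ≤ ∑ τ : Equiv.Perm (Fin n), w τ * ∑ i, (s ∘ τ) i * R i (s ∘ τ) := by
          refine Finset.sum_le_sum fun τ _ => ?_
          exact mul_le_mul_of_nonneg_left
            ((hproper (s ∘ τ) (hsτmem τ) t htmem).1) (hw0 τ)
      _ = ∑ τ : Equiv.Perm (Fin n), w τ * ∑ i, s i * R i s := by
          refine Finset.sum_congr rfl fun τ _ => ?_
          rw [hGsymm τ s]
      _ = ∑ i, s i * R i s := by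
          rw [← Finset.sum_mul, hw1, one_mul]
  refine ⟨part1, part2, ?_⟩
  rw [part1]
  exact part2
end

section
/- Let n ≥ 3 and let C_1, …, C_n be real constants. Suppose that for every positive definite density matrix ρ on ℂ^n with spectral decomposition ρ = Σ_i r_i |e_i⟩⟨e_i| and every unitary U on ℂ^n, setting σ = UρU†, |f_i⟩ = U|e_i⟩, and p_i = ⟨f_i|ρ|f_i⟩, the honesty inequality S(ρ‖σ) + Σ_{i=1}^n C_i (r_i − p_i) ≥ 0 holds. Then C_1 = C_2 = ⋯ = C_n. In other words, in the quantum setting the constants allowed by Aczel's characterization R_i(p) = D ln p + C_i must all be equal. -/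
open Matrix BigOperators ComplexOrder

/-- Let `n ≥ 3` and `C 1, …, C n` be real constants.  If for every positive
definite density matrix `ρ = ∑ i, r i • |e i⟩⟨e i|` and every unitary `U`, with
`f i = U |e i⟩`, `σ = UρU†` (so `σ = ∑ j, r j • |f j⟩⟨f j|`) and `p i = ⟨f i|ρ|f i⟩`,
the honesty inequality `S(ρ‖σ) + ∑ i, C i * (r i - p i) ≥ 0` holds — where
`S(ρ‖σ) = ∑ i, r i * ln (r i) - ∑ i j, r i * |⟨f j|e i⟩|² * ln (r j)` — then all the
`C i` are equal. -/
theorem stmt_8 {n : ℕ} (hn : 3 ≤ n) (C : Fin n → ℝ)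
    (h : ∀ (ρ : Matrix (Fin n) (Fin n) ℂ) (r : Fin n → ℝ) (e : Fin n → (Fin n → ℂ))
        (U : Matrix (Fin n) (Fin n) ℂ),
      (∀ i j, star (e i) ⬝ᵥ e j = if i = j then (1 : ℂ) else 0) →
      ρ = ∑ i, (r i : ℂ) • vecMulVec (e i) (star (e i)) →
      (∀ i, 0 < r i) → ρ.trace = 1 →
      U ∈ Matrix.unitaryGroup (Fin n) ℂ →
      0 ≤ ((∑ i, r i * Real.log (r i))
            - ∑ i, ∑ j, r i * ‖star (U.mulVec (e j)) ⬝ᵥ e i‖ ^ 2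
                * Real.log (r j))
          + ∑ i, C i * (r i - (star (U.mulVec (e i)) ⬝ᵥ ρ.mulVec (U.mulVec (e i))).re)) :
    ∀ i j, C i = C j := by
  have hn0 : (0:ℝ) < (n:ℝ) := by
    have : 0 < n := by omega
    exact_mod_cast this
  have hinv : (0:ℝ) < 1/n := by positivity
  have key : ∀ a b : Fin n, a ≠ b → ∀ δ : ℝ, 0 < δ → δ < 1/n →
      0 ≤ 2*δ*(Real.log (1/n+δ) - Real.log (1/n-δ)) + (C a - C b) * (2*δ) := by
    intro a b hab δ hδ0 hδ1
    set τ : Equiv.Perm (Fin n) := Equiv.swap a b with hτ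
    set r : Fin n → ℝ := fun i =>
      1/n + (if i = a then δ else 0) - (if i = b then δ else 0) with hrdef
    have hra : r a = 1/n + δ := by simp [hrdef, hab]
    have hrb : r b = 1/n - δ := by simp [hrdef, hab.symm]
    have hrother : ∀ i, i ≠ a → i ≠ b → r i = 1/n := by
      intro i h1 h2; simp [hrdef, h1, h2]
    have hτa : τ a = b := Equiv.swap_apply_left a b
    have hτb : τ b = a := Equiv.swap_apply_right a b
    have hτo : ∀ i, i ≠ a → i ≠ b → τ i = i := fun i h1 h2 =>
      Equiv.swap_apply_of_ne_of_ne h1 h2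
    set e : Fin n → (Fin n → ℂ) := fun i => Pi.single i 1 with hedef
    set ρ : Matrix (Fin n) (Fin n) ℂ := Matrix.diagonal (fun i => (r i : ℂ)) with hρdef
    set U : Matrix (Fin n) (Fin n) ℂ :=
      Matrix.of (fun i k => if i = τ k then 1 else 0) with hUdef
    have horth : ∀ i j, star (e i) ⬝ᵥ e j = if i = j then (1 : ℂ) else 0 := by
      intro i j
      simp [hedef, dotProduct, Pi.single_apply, apply_ite, eq_comm]
    have hdecomp : ρ = ∑ i, (r i : ℂ) • vecMulVec (e i) (star (e i)) := by
      ext i j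
      rw [Matrix.sum_apply]
      have hterm : ∀ k : Fin n, ((r k : ℂ) • vecMulVec (e k) (star (e k))) i j
          = if i = k then (if j = k then (r k : ℂ) else 0) else 0 := by
        intro k
        simp only [Matrix.smul_apply, vecMulVec_apply, hedef, Pi.star_apply,
          Pi.single_apply, smul_eq_mul]
        split_ifs <;> simp
      rw [Finset.sum_congr rfl fun k _ => hterm k, Finset.sum_ite_eq]
      simp only [Finset.mem_univ, if_true, hρdef, Matrix.diagonal_apply]
      split_ifs with h1 h2 h2
      · rfl
      · exact absurd h1.symm h2
      · exact absurd h2.symm h1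
      · rfl
    have hpos : ∀ i, 0 < r i := by
      intro i
      rcases eq_or_ne i a with rfl | h1
      · rw [hra]; linarith
      rcases eq_or_ne i b with rfl | h2
      · rw [hrb]; linarith
      · rw [hrother i h1 h2]; linarith
    have hsum : ∑ i, r i = 1 := by
      simp only [hrdef]
      rw [Finset.sum_sub_distrib, Finset.sum_add_distrib]
      simp [Finset.sum_ite_eq', Finset.card_univ, mul_comm]
      field_simp
    have htr : ρ.trace = 1 := by
      simp only [hρdef, Matrix.trace_diagonal]
      rw [← Complex.ofReal_sum, hsum, Complex.ofReal_one]
    have hUmem : U ∈ Matrix.unitaryGroup (Fin n) ℂ := by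
      rw [Matrix.mem_unitaryGroup_iff]
      ext i j
      rw [Matrix.mul_apply]
      have hterm : ∀ k, U i k * (star U) k j
          = if τ.symm i = k then (if j = τ k then (1:ℂ) else 0) else 0 := by
        intro k
        simp only [hUdef, Matrix.star_apply, Matrix.of_apply]
        by_cases hk : τ.symm i = k
        · subst hk
          rw [if_pos rfl, if_pos (by rw [Equiv.apply_symm_apply]), one_mul]
          split_ifs <;> simp
        · rw [if_neg hk, if_neg, zero_mul]
          intro hc
          exact hk (by rw [hc, Equiv.symm_apply_apply])
      rw [Finset.sum_congr rfl fun k _ => hterm k, Finset.sum_ite_eq]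
      simp only [Finset.mem_univ, if_true, Equiv.apply_symm_apply, Matrix.one_apply]
      split_ifs with h1 h2 h2
      · rfl
      · exact absurd h1.symm h2
      · exact absurd h2.symm h1
      · rfl
    have hUe : ∀ j, U.mulVec (e j) = e (τ j) := by
      intro j
      ext k
      simp [hUdef, hedef, Matrix.mulVec_single, Pi.single_apply]
    have habs : ∀ i j, ‖star (U.mulVec (e j)) ⬝ᵥ e i‖ ^ 2
        = if τ j = i then 1 else 0 := by
      intro i j
      rw [hUe, horth]
      split_ifs <;> simp
    have hP : ∀ i, (star (U.mulVec (e i)) ⬝ᵥ ρ.mulVec (U.mulVec (e i))).re = r (τ i) := by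
      intro i
      rw [hUe]
      have hq : star (e (τ i)) ⬝ᵥ ρ.mulVec (e (τ i)) = ((r (τ i) : ℝ) : ℂ) := by
        show star (Pi.single (τ i) (1:ℂ)) ⬝ᵥ
          (Matrix.diagonal fun k => (r k : ℂ)) *ᵥ Pi.single (τ i) 1 = _
        rw [Matrix.diagonal_mulVec_single, mul_one]
        rw [dotProduct]
        rw [Finset.sum_eq_single (τ i)]
        · simp
        · intro m _ hm
          simp [Pi.single_apply, hm]
        · intro hm; exact absurd (Finset.mem_univ _) hm
      rw [hq, Complex.ofReal_re]
    have H := h ρ r e U horth hdecomp hpos htr hUmem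
    simp only [habs, hP, ite_mul, one_mul, zero_mul, mul_ite, mul_one, mul_zero] at H
    have hτs : τ.symm = τ := Equiv.symm_swap a b
    have hinner : ∀ i, (∑ j, if τ j = i then r i * Real.log (r j) else 0)
        = r i * Real.log (r (τ i)) := by
      intro i
      rw [Finset.sum_eq_single (τ.symm i)]
      · rw [Equiv.apply_symm_apply, if_pos rfl, hτs]
      · intro j _ hj
        rw [if_neg]
        intro hc
        exact hj (by rw [← hc, Equiv.symm_apply_apply])
      · intro hmem; exact absurd (Finset.mem_univ _) hmem
    simp only [hinner] at H
    have hcomb : ((∑ i, r i * Real.log (r i)) - ∑ i, r i * Real.log (r (τ i)))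
          + ∑ i, C i * (r i - r (τ i))
        = 2*δ*(Real.log (1/n+δ) - Real.log (1/n-δ)) + (C a - C b) * (2*δ) := by
      rw [← Finset.sum_sub_distrib, ← Finset.sum_add_distrib]
      rw [show (Finset.univ : Finset (Fin n)) = Finset.univ from rfl]
      rw [← Finset.sum_subset (Finset.subset_univ ({a, b} : Finset (Fin n)))]
      · rw [Finset.sum_pair hab, hτa, hτb, hra, hrb]
        ring
      · intro i _ hi
        simp only [Finset.mem_insert, Finset.mem_singleton, not_or] at hi
        rw [hτo i hi.1 hi.2]
        ring
    rw [hcomb] at H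
    exact H
  intro i j
  rcases eq_or_ne i j with rfl | hij
  · rfl
  have habsle : ∀ δ : ℝ, δ ∈ Set.Ioo (0:ℝ) (1/n) →
      |C i - C j| ≤ Real.log (1/n+δ) - Real.log (1/n-δ) := by
    intro δ hδ
    obtain ⟨hδ0, hδ1⟩ := hδ
    have h1 := key i j hij δ hδ0 hδ1
    have h2 := key j i hij.symm δ hδ0 hδ1
    rw [abs_le]
    constructor <;> nlinarith
  have hlim : Filter.Tendsto (fun δ : ℝ => Real.log (1/n+δ) - Real.log (1/n-δ))
      (nhdsWithin 0 (Set.Ioi 0)) (nhds 0) := by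
    have c1 : ContinuousAt (fun δ : ℝ => Real.log (1/n+δ)) 0 := by
      have hne : (1:ℝ)/n + 0 ≠ 0 := by positivity
      exact (Real.continuousAt_log hne).comp (continuousAt_const.add continuousAt_id)
    have c2 : ContinuousAt (fun δ : ℝ => Real.log (1/n-δ)) 0 := by
      have hne : (1:ℝ)/n - 0 ≠ 0 := by
        rw [sub_zero]; positivity
      exact (Real.continuousAt_log hne).comp (continuousAt_const.sub continuousAt_id)
    have h2 : Filter.Tendsto (fun δ : ℝ => Real.log (1/n+δ) - Real.log (1/n-δ))
        (nhdsWithin 0 (Set.Ioi 0))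
        (nhds (Real.log (1/(n:ℝ)+0) - Real.log (1/(n:ℝ)-0))) :=
      (c1.sub c2).continuousWithinAt (s := Set.Ioi (0:ℝ))
    simpa only [add_zero, sub_zero, sub_self] using h2
  have hev : ∀ᶠ δ in nhdsWithin (0:ℝ) (Set.Ioi 0),
      |C i - C j| ≤ Real.log (1/n+δ) - Real.log (1/n-δ) := by
    filter_upwards [Ioo_mem_nhdsGT_of_mem (Set.mem_Ico.mpr ⟨le_refl 0, hinv⟩)] with δ hδ
    exact habsle δ hδ
  have hle : |C i - C j| ≤ 0 := ge_of_tendsto hlim hev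
  have := abs_nonneg (C i - C j)
  have : |C i - C j| = 0 := le_antisymm hle this
  have := abs_eq_zero.mp this
  linarith
end

section
/- Let ρ be a positive definite density matrix on ℂ^n and let U : ℝ → M_n(ℂ) be a twice continuously differentiable curve of unitary matrices with U(0) = I and U'(0) = iX for a Hermitian matrix X. Set σ(t) = U(t)ρU(t)†. Then d²/dt² S(ρ‖σ(t)) evaluated at t = 0 equals 2 Tr[ [X,ρ] (ln ρ) X ], where [X,ρ] = Xρ − ρX. -/
open Matrix BigOperators ComplexOrder

/-- Let `ρ = ∑ i, r i • |e i⟩⟨e i|` be a positive definite density matrix with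
matrix logarithm `L = ln ρ`, and let `U : ℝ → Mₙ(ℂ)` be a twice continuously
differentiable (entrywise) curve of unitaries near `t = 0` with `U 0 = 1` and
`U'(0) = iX` for a Hermitian matrix `X`.  Then the second derivative at `t = 0` of
`S(ρ‖U t ρ (U t)†) = Tr[ρ ln ρ] - Tr[ρ (U t) (ln ρ) (U t)†]` equals
`2 * Tr[[X,ρ] (ln ρ) X]`, where `[X,ρ] = Xρ - ρX`. -/
theorem stmt_10 {n : ℕ} (ρ : Matrix (Fin n) (Fin n) ℂ)
    (r : Fin n → ℝ) (e : Fin n → (Fin n → ℂ))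
    (he : ∀ i j, star (e i) ⬝ᵥ e j = if i = j then (1 : ℂ) else 0)
    (hρd : ρ = ∑ i, (r i : ℂ) • vecMulVec (e i) (star (e i)))
    (hrpos : ∀ i, 0 < r i) (hρtr : ρ.trace = 1)
    (L : Matrix (Fin n) (Fin n) ℂ)
    (hL : L = ∑ i, (Real.log (r i) : ℂ) • vecMulVec (e i) (star (e i)))
    (U : ℝ → Matrix (Fin n) (Fin n) ℂ)
    (hUsmooth : ∀ i j, ContDiff ℝ 2 (fun t => U t i j))
    (hUuni : ∀ᶠ t in nhds (0 : ℝ), U t ∈ Matrix.unitaryGroup (Fin n) ℂ)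
    (hU0 : U 0 = 1)
    (X : Matrix (Fin n) (Fin n) ℂ) (hX : Xᴴ = X)
    (hU' : Matrix.of (fun i j => deriv (fun t => U t i j) 0) = Complex.I • X) :
    deriv (deriv (fun t =>
        Matrix.trace (ρ * L) - Matrix.trace (ρ * (U t * L * (U t)ᴴ)))) 0
      = 2 * Matrix.trace ((X * ρ - ρ * X) * L * X) := by
  classical
  -- entry derivatives
  set d1 : Fin n → Fin n → ℝ → ℂ := fun i j => deriv (fun t => U t i j) with hd1def
  have hD1 : ∀ i j t, HasDerivAt (fun s => U s i j) (d1 i j t) t := fun i j t =>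
    (((hUsmooth i j).differentiable (by norm_num)) t).hasDerivAt
  have hC1 : ∀ i j, ContDiff ℝ 1 (d1 i j) := by
    intro i j
    have h2 : ContDiff ℝ ((1:WithTop ℕ∞) + 1) (fun t => U t i j) := by
      rw [show ((1:WithTop ℕ∞) + 1) = 2 by norm_num]; exact hUsmooth i j
    exact (contDiff_succ_iff_deriv.mp h2).2.2
  set W : Matrix (Fin n) (Fin n) ℂ := Matrix.of (fun i j => deriv (d1 i j) 0) with hWdef
  have hD2 : ∀ i j, HasDerivAt (d1 i j) (W i j) 0 := fun i j =>
    (((hC1 i j).differentiable (by norm_num)) 0).hasDerivAt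
  have hd10 : ∀ i j, d1 i j 0 = Complex.I * X i j := fun i j =>
    Matrix.ext_iff.mpr hU' i j
  have hXs : ∀ a b : Fin n, star (X a b) = X b a := by
    intro a b
    conv_lhs => rw [← hX]
    simp [conjTranspose_apply]
  have hstar : ∀ a b : Fin n, star (Complex.I * X a b) = -Complex.I * X b a := by
    intro a b
    rw [star_mul', hXs]
    simp [Complex.star_def, Complex.conj_I]
  -- unitarity, pointwise
  have huni : ∀ᶠ t in nhds (0:ℝ), ∀ i j : Fin n,
      (∑ k, U t i k * star (U t j k)) = if i = j then (1:ℂ) else 0 := by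
    filter_upwards [hUuni] with t ht
    intro i j
    have h2 := Matrix.ext_iff.mpr (Matrix.mem_unitaryGroup_iff.mp ht) i j
    simpa [Matrix.mul_apply, Matrix.star_apply, Matrix.one_apply] using h2
  -- second derivative of unitarity
  have hWkey : ∀ i j : Fin n, W i j + star (W j i) + 2 * (X * X) i j = 0 := by
    intro i j
    have hg1 : ∀ t, HasDerivAt (fun s => ∑ k, U s i k * star (U s j k))
        (∑ k, (d1 i k t * star (U t j k) + U t i k * star (d1 j k t))) t := fun t =>
      HasDerivAt.fun_sum (fun k _ => (hD1 i k t).fun_mul ((hD1 j k t).star))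
    have hg1zero : (fun t => ∑ k, (d1 i k t * star (U t j k) + U t i k * star (d1 j k t)))
        =ᶠ[nhds (0:ℝ)] (fun _ => (0:ℂ)) := by
      filter_upwards [huni.eventually_nhds] with t ht
      have hconst : (fun s => ∑ k, U s i k * star (U s j k))
          =ᶠ[nhds t] (fun _ => if i = j then (1:ℂ) else 0) := by
        filter_upwards [ht] with s hs using hs i j
      have h0 : HasDerivAt (fun s => ∑ k, U s i k * star (U s j k)) 0 t :=
        hconst.hasDerivAt_iff.mpr (hasDerivAt_const t _)
      exact (hg1 t).unique h0
    have hg2 : HasDerivAt (fun t => ∑ k, (d1 i k t * star (U t j k) + U t i k * star (d1 j k t)))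
        (∑ k, ((W i k * star (U 0 j k) + d1 i k 0 * star (d1 j k 0))
             + (d1 i k 0 * star (d1 j k 0) + U 0 i k * star (W j k)))) 0 :=
      HasDerivAt.fun_sum fun k _ =>
        (((hD2 i k).fun_mul ((hD1 j k 0).star)).fun_add ((hD1 i k 0).fun_mul ((hD2 j k).star)))
    have h0' : HasDerivAt
        (fun t => ∑ k, (d1 i k t * star (U t j k) + U t i k * star (d1 j k t))) 0 0 :=
      hg1zero.hasDerivAt_iff.mpr (hasDerivAt_const _ _)
    have E := hg2.unique h0'
    rw [hU0] at E
    simp only [hd10] at E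
    have e1 : ∀ k : Fin n,
        ((W i k * star ((1 : Matrix (Fin n) (Fin n) ℂ) j k) + (Complex.I * X i k) * star (Complex.I * X j k))
          + ((Complex.I * X i k) * star (Complex.I * X j k)
              + (1 : Matrix (Fin n) (Fin n) ℂ) i k * star (W j k)))
        = (if j = k then W i k else 0) + (if i = k then star (W j k) else 0)
            + 2 * (X i k * X k j) := by
      intro k
      simp only [Matrix.one_apply, apply_ite (star : ℂ → ℂ), star_one, star_zero, hstar]
      split_ifs <;> ring_nf <;> simp [Complex.I_sq] <;> ring
    rw [Finset.sum_congr rfl (fun k _ => e1 k)] at E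
    simp only [Finset.sum_add_distrib, Finset.sum_ite_eq, Finset.mem_univ, if_true,
      ← Finset.mul_sum] at E
    have hxx : (X * X) i j = ∑ k, X i k * X k j := by rw [Matrix.mul_apply]
    rw [hxx]
    linear_combination E
  have hWmat : W + Wᴴ = (-2 : ℂ) • (X * X) := by
    ext i j
    simp only [Matrix.add_apply, Matrix.conjTranspose_apply, Matrix.smul_apply, smul_eq_mul]
    linear_combination hWkey i j
  -- commutation of ρ and L
  have hvv : ∀ i j : Fin n, vecMulVec (e i) (star (e i)) * vecMulVec (e j) (star (e j))
      = if i = j then vecMulVec (e i) (star (e i)) else 0 := by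
    intro i j
    ext a b
    have h1 : (vecMulVec (e i) (star (e i)) * vecMulVec (e j) (star (e j))) a b
        = (star (e i) ⬝ᵥ e j) * (e i a * star (e j b)) := by
      simp only [Matrix.mul_apply, vecMulVec_apply, dotProduct, Finset.sum_mul]
      apply Finset.sum_congr rfl; intro k _
      simp [Pi.star_apply]; ring
    rw [h1, he i j]
    split_ifs with h
    · subst h; simp [vecMulVec_apply]
    · simp
  have hcomm : ρ * L = L * ρ := by
    rw [hρd, hL, Finset.sum_mul, Finset.sum_mul]
    apply Finset.sum_congr rfl; intro i _
    rw [Finset.mul_sum, Finset.mul_sum]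
    apply Finset.sum_congr rfl; intro j _
    rw [Matrix.smul_mul, Matrix.mul_smul, Matrix.smul_mul, Matrix.mul_smul, hvv]
    split_ifs with h
    · subst h; rw [smul_comm]
    · simp
  -- expansion lemma
  have hexp : ∀ A B : Matrix (Fin n) (Fin n) ℂ, Matrix.trace (ρ * (A * L * Bᴴ)) =
      ∑ p, ∑ q, ∑ j, ∑ k, ρ p q * L k j * (A q k * star (B p j)) := by
    intro A B
    simp only [Matrix.trace, Matrix.diag_apply, Matrix.mul_apply, Matrix.conjTranspose_apply,
      Finset.mul_sum, Finset.sum_mul]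
    apply Finset.sum_congr rfl; intro p _
    apply Finset.sum_congr rfl; intro q _
    apply Finset.sum_congr rfl; intro j _
    apply Finset.sum_congr rfl; intro k _
    ring
  -- the scalar function and its derivatives
  set S : ℝ → ℂ := fun t => ∑ p, ∑ q, ∑ j, ∑ k,
      ρ p q * L k j * (U t q k * star (U t p j)) with hSdef
  set S1 : ℝ → ℂ := fun t => ∑ p, ∑ q, ∑ j, ∑ k,
      ρ p q * L k j * (d1 q k t * star (U t p j) + U t q k * star (d1 p j t)) with hS1def
  have hS : ∀ t, HasDerivAt S (S1 t) t := by
    intro t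
    exact HasDerivAt.fun_sum fun p _ => HasDerivAt.fun_sum fun q _ => HasDerivAt.fun_sum fun j _ =>
      HasDerivAt.fun_sum fun k _ => ((hD1 q k t).fun_mul ((hD1 p j t).star)).const_mul _
  have hS1 : HasDerivAt S1 (∑ p, ∑ q, ∑ j, ∑ k,
      ρ p q * L k j * ((W q k * star (U 0 p j) + d1 q k 0 * star (d1 p j 0))
        + (d1 q k 0 * star (d1 p j 0) + U 0 q k * star (W p j)))) 0 := by
    exact HasDerivAt.fun_sum fun p _ => HasDerivAt.fun_sum fun q _ => HasDerivAt.fun_sum fun j _ =>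
      HasDerivAt.fun_sum fun k _ =>
        ((((hD2 q k).fun_mul ((hD1 p j 0).star)).fun_add
          ((hD1 q k 0).fun_mul ((hD2 p j).star)))).const_mul _
  -- rewrite the goal
  have hFeq : (fun t => Matrix.trace (ρ * L) - Matrix.trace (ρ * (U t * L * (U t)ᴴ)))
      = fun t => Matrix.trace (ρ * L) - S t := by
    funext t
    rw [hSdef]
    simp only
    rw [hexp (U t) (U t)]
  rw [hFeq]
  have hderiv1 : deriv (fun t => Matrix.trace (ρ * L) - S t) = fun t => 0 - S1 t := by
    funext t
    exact ((hasDerivAt_const t _).sub (hS t)).deriv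
  rw [hderiv1]
  rw [((hasDerivAt_const (0:ℝ) (0:ℂ)).fun_sub hS1).deriv]
  -- split the second derivative into traces
  have hsplit : (∑ p, ∑ q, ∑ j, ∑ k,
      ρ p q * L k j * ((W q k * star (U 0 p j) + d1 q k 0 * star (d1 p j 0))
        + (d1 q k 0 * star (d1 p j 0) + U 0 q k * star (W p j))))
      = Matrix.trace (ρ * (W * L * (U 0)ᴴ))
        + Matrix.trace (ρ * ((Complex.I • X) * L * (Complex.I • X)ᴴ))
        + (Matrix.trace (ρ * ((Complex.I • X) * L * (Complex.I • X)ᴴ))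
          + Matrix.trace (ρ * (U 0 * L * Wᴴ))) := by
    simp only [hd10, mul_add, Finset.sum_add_distrib]
    rw [hexp W (U 0), hexp (Complex.I • X) (Complex.I • X), hexp (U 0) W]
    rfl
  rw [hsplit]
  have hT1 : Matrix.trace (ρ * (W * L * (U 0)ᴴ)) = Matrix.trace (ρ * (W * L)) := by
    rw [hU0, conjTranspose_one, Matrix.mul_one]
  have hT4 : Matrix.trace (ρ * (U 0 * L * Wᴴ)) = Matrix.trace (ρ * (L * Wᴴ)) := by
    rw [hU0, Matrix.one_mul]
  have hT2 : Matrix.trace (ρ * ((Complex.I • X) * L * (Complex.I • X)ᴴ))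
      = Matrix.trace (ρ * (X * L * X)) := by
    rw [conjTranspose_smul, hX]
    simp only [Matrix.smul_mul, Matrix.mul_smul, smul_smul, Complex.star_def, Complex.conj_I]
    rw [show (-Complex.I * Complex.I : ℂ) = 1 by
      rw [neg_mul, Complex.I_mul_I, neg_neg], one_smul]
  rw [hT1, hT2, hT4]
  -- final algebra
  have hWL : Matrix.trace (ρ * (W * L)) + Matrix.trace (ρ * (L * Wᴴ))
      = (-2 : ℂ) * Matrix.trace (ρ * (L * (X * X))) := by
    have h1 : Matrix.trace (ρ * (W * L)) = Matrix.trace (ρ * (L * W)) := by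
      calc Matrix.trace (ρ * (W * L)) = Matrix.trace (W * L * ρ) := trace_mul_comm _ _
        _ = Matrix.trace (W * (ρ * L)) := by rw [Matrix.mul_assoc, ← hcomm]
        _ = Matrix.trace (ρ * L * W) := trace_mul_comm _ _
        _ = Matrix.trace (ρ * (L * W)) := by rw [Matrix.mul_assoc]
    rw [h1, ← trace_add, ← Matrix.mul_add, ← Matrix.mul_add, hWmat]
    rw [Matrix.mul_smul, Matrix.mul_smul, trace_smul, smul_eq_mul]
  have hRHS : Matrix.trace ((X * ρ - ρ * X) * L * X)
      = Matrix.trace (ρ * (L * (X * X))) - Matrix.trace (ρ * (X * L * X)) := by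
    have e1 : Matrix.trace (X * ρ * L * X) = Matrix.trace (ρ * (L * (X * X))) := by
      calc Matrix.trace (X * ρ * L * X) = Matrix.trace (X * (ρ * (L * X))) := by
            simp only [Matrix.mul_assoc]
        _ = Matrix.trace ((ρ * (L * X)) * X) := trace_mul_comm _ _
        _ = Matrix.trace (ρ * (L * (X * X))) := by simp only [Matrix.mul_assoc]
    have e2 : Matrix.trace (ρ * X * L * X) = Matrix.trace (ρ * (X * L * X)) := by
      simp only [Matrix.mul_assoc]
    rw [sub_mul, sub_mul, trace_sub, e1, e2]
  linear_combination (-1 : ℂ) * hWL + (-2 : ℂ) * hRHS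
end

section
/- For every positive definite Hermitian n×n complex matrix ρ and every Hermitian n×n complex matrix X, the quantity Tr[ [X,ρ] (ln ρ) X ] is a real number and is nonnegative, where [X,ρ] = Xρ − ρX. -/
/-!
In the orthonormal basis `e` both `ρ` and `ln ρ` are diagonal, with entries `r i` and `ln (r i)`.
If `Y` is the (Hermitian) matrix of `X` in that basis, the trace equals
`∑ i j, (r j - r i) * ln (r j) * ‖Y i j‖ ^ 2`, which is real. Swapping `i` and `j` and averaging
gives `½ ∑ i j, (r j - r i) * (ln (r j) - ln (r i)) * ‖Y i j‖ ^ 2`, nonnegative since `ln` is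
increasing.
-/

open Matrix BigOperators ComplexOrder

theorem sum_sub_mul_nonneg_of_monovary {ι : Type*} [Fintype ι] {a b : ι → ℝ} (hab : Monovary a b)
    {w : ι → ι → ℝ} (hw : ∀ i j, w i j = w j i) (hw₀ : ∀ i j, 0 ≤ w i j) :
    0 ≤ ∑ i, ∑ j, (a j - a i) * b j * w i j := by
  have hswap : ∑ i, ∑ j, (a j - a i) * b j * w i j = ∑ i, ∑ j, (a i - a j) * b i * w i j := by
    rw [Finset.sum_comm]
    simp_rw [hw]
  have htwice : 2 * ∑ i, ∑ j, (a j - a i) * b j * w i j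
      = ∑ i, ∑ j, (a j - a i) * (b j - b i) * w i j := by
    rw [two_mul]
    nth_rw 2 [hswap]
    simp_rw [← Finset.sum_add_distrib]
    congr! 2
    ring
  have : 0 ≤ ∑ i, ∑ j, (a j - a i) * (b j - b i) * w i j :=
    Finset.sum_nonneg fun i _ => Finset.sum_nonneg fun j _ =>
      mul_nonneg (hab.sub_mul_sub_nonneg i j) (hw₀ i j)
  linarith

namespace Matrix

variable {ι : Type*} [Fintype ι] [DecidableEq ι]

theorem transpose_of_mem_unitaryGroup {R : Type*} [CommRing R] [StarRing R] {e : ι → ι → R}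
    (he : ∀ i j, star (e i) ⬝ᵥ e j = if i = j then 1 else 0) :
    (of e)ᵀ ∈ unitaryGroup ι R := by
  rw [mem_unitaryGroup_iff']
  ext i j
  simpa [mul_apply, dotProduct, one_apply] using he i j

theorem sum_smul_vecMulVec_eq_mul_diagonal_mul {R : Type*} [CommSemiring R] [StarRing R]
    (e : ι → ι → R) (d : ι → R) :
    ∑ i, d i • vecMulVec (e i) (star (e i)) = (of e)ᵀ * diagonal d * (of e)ᵀᴴ := by
  ext k l
  rw [mul_apply]
  simp only [Matrix.sum_apply, Matrix.smul_apply, vecMulVec_apply, mul_diagonal, transpose_apply,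
    of_apply, conjTranspose_apply, Pi.star_apply, smul_eq_mul]
  exact Finset.sum_congr rfl fun i _ => by ring

theorem trace_mul_mul_star_of_mem_unitaryGroup {R : Type*} [CommRing R] [StarRing R]
    {U : Matrix ι ι R} (hU : U ∈ unitaryGroup ι R) (Z : Matrix ι ι R) :
    trace (U * Z * star U) = trace Z := by
  rw [trace_mul_cycle, mem_unitaryGroup_iff'.mp hU, one_mul]

variable {𝕜 : Type*} [RCLike 𝕜]

theorem commutator_diagonal_mul_diagonal (Y : Matrix ι ι 𝕜) (a b : ι → 𝕜) :
    (Y * diagonal a - diagonal a * Y) * diagonal b = of fun i j => (a j - a i) * b j * Y i j := by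
  ext i j
  simp only [sub_mul, Matrix.sub_apply, mul_diagonal, diagonal_mul, of_apply]
  ring

theorem trace_commutator_diagonal_mul_diagonal_mul {Y : Matrix ι ι 𝕜} (hY : Y.IsHermitian)
    (a b : ι → ℝ) :
    trace ((Y * diagonal (fun i => (a i : 𝕜)) - diagonal (fun i => (a i : 𝕜)) * Y)
        * diagonal (fun i => (b i : 𝕜)) * Y)
      = ((∑ i, ∑ j, (a j - a i) * b j * ‖Y i j‖ ^ 2 : ℝ) : 𝕜) := by
  rw [commutator_diagonal_mul_diagonal]
  simp only [trace, diag, mul_apply, of_apply]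
  push_cast
  refine Finset.sum_congr rfl fun i _ => Finset.sum_congr rfl fun j _ => ?_
  rw [← RCLike.mul_conj, ← hY.apply j i, RCLike.star_def, mul_assoc]

end Matrix

theorem stmt_11_general {n : ℕ} (ρ : Matrix (Fin n) (Fin n) ℂ)
    (r : Fin n → ℝ) (e : Fin n → (Fin n → ℂ))
    (he : ∀ i j, star (e i) ⬝ᵥ e j = if i = j then (1 : ℂ) else 0)
    (hρd : ρ = ∑ i, (r i : ℂ) • vecMulVec (e i) (star (e i)))
    (hrpos : ∀ i, 0 < r i)
    (L : Matrix (Fin n) (Fin n) ℂ)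
    (hL : L = ∑ i, (Real.log (r i) : ℂ) • vecMulVec (e i) (star (e i)))
    (X : Matrix (Fin n) (Fin n) ℂ) (hX : Xᴴ = X) :
    (Matrix.trace ((X * ρ - ρ * X) * L * X)).im = 0
    ∧ 0 ≤ (Matrix.trace ((X * ρ - ρ * X) * L * X)).re := by
  set U := (of e)ᵀ
  have hU : U ∈ unitaryGroup (Fin n) ℂ := transpose_of_mem_unitaryGroup he
  set φ := Unitary.conjStarAlgAut ℂ _ ⟨U, hU⟩
  set Y := Uᴴ * X * U
  have hY : Y.IsHermitian := isHermitian_conjTranspose_mul_mul U hX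
  have hUU : U * Uᴴ = 1 := mem_unitaryGroup_iff.mp hU
  have hXY : X = φ Y := by
    calc X = U * Uᴴ * X * (U * Uᴴ) := by rw [hUU, one_mul, mul_one]
      _ = φ Y := by simp only [φ, Y, Unitary.conjStarAlgAut_apply, star_eq_conjTranspose, mul_assoc]
  have hρ : ρ = φ (diagonal fun i => (r i : ℂ)) := by
    rw [hρd, sum_smul_vecMulVec_eq_mul_diagonal_mul]; rfl
  have hL' : L = φ (diagonal fun i => (Real.log (r i) : ℂ)) := by
    rw [hL, sum_smul_vecMulVec_eq_mul_diagonal_mul]; rfl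
  have hconj : trace ((X * ρ - ρ * X) * L * X) = trace ((Y * diagonal (fun i => (r i : ℂ))
      - diagonal (fun i => (r i : ℂ)) * Y) * diagonal (fun i => (Real.log (r i) : ℂ)) * Y) := by
    rw [hXY, hρ, hL', ← map_mul, ← map_mul, ← map_sub, ← map_mul, ← map_mul]
    exact trace_mul_mul_star_of_mem_unitaryGroup hU _
  have hdiag := trace_commutator_diagonal_mul_diagonal_mul (𝕜 := ℂ) hY r (fun i => Real.log (r i))
  -- the `RCLike` coercion `ℝ → ℂ` is `algebraMap`, not syntactically `Complex.ofReal`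
  simp only [Complex.coe_algebraMap] at hdiag
  rw [hconj, hdiag, Complex.ofReal_im, Complex.ofReal_re]
  refine ⟨rfl, sum_sub_mul_nonneg_of_monovary ?_ ?_ fun _ _ => by positivity⟩
  · exact fun i j h => ((Real.log_lt_log_iff (hrpos i) (hrpos j)).mp h).le
  · intro i j
    rw [← hY.apply i j, norm_star]

/-- For every positive definite Hermitian matrix `ρ = ∑ i, r i • |e i⟩⟨e i|`
(with matrix logarithm `L = ln ρ = ∑ i, (ln r i) • |e i⟩⟨e i|`) and every Hermitian
matrix `X`, the quantity `Tr[[X,ρ] (ln ρ) X]` is real and nonnegative. -/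
theorem stmt_11 {n : ℕ} (ρ : Matrix (Fin n) (Fin n) ℂ)
    (hρ : ρ.PosDef)
    (r : Fin n → ℝ) (e : Fin n → (Fin n → ℂ))
    (he : ∀ i j, star (e i) ⬝ᵥ e j = if i = j then (1 : ℂ) else 0)
    (hρd : ρ = ∑ i, (r i : ℂ) • vecMulVec (e i) (star (e i)))
    (hrpos : ∀ i, 0 < r i)
    (L : Matrix (Fin n) (Fin n) ℂ)
    (hL : L = ∑ i, (Real.log (r i) : ℂ) • vecMulVec (e i) (star (e i)))
    (X : Matrix (Fin n) (Fin n) ℂ) (hX : Xᴴ = X) :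
    (Matrix.trace ((X * ρ - ρ * X) * L * X)).im = 0
    ∧ 0 ≤ (Matrix.trace ((X * ρ - ρ * X) * L * X)).re :=
  stmt_11_general ρ r e he hρd hrpos L hL X hX
end

section
/- Let ρ be a positive definite Hermitian n×n complex matrix (n ≥ 2) having at least two distinct eigenvalues. Then there exists a Hermitian n×n matrix X such that Tr[ [X,ρ] (ln ρ) X ] > 0. Moreover X can be chosen with support contained in the two-dimensional span of two eigenvectors of ρ corresponding to distinct eigenvalues. -/
/-!
Take `X = |e k⟩⟨e l| + |e l⟩⟨e k|` for eigenvectors with `r k ≠ r l`. Multiplying an outer product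
`|e k⟩⟨e l|` of an orthonormal family by a spectral sum `∑ f i |e i⟩⟨e i|` only rescales it, so
`Tr[[X,ρ] (ln ρ) X] = (r l - r k) (ln (r l) - ln (r k))`, which is positive since `ln` is
strictly increasing.
-/

open Matrix BigOperators ComplexOrder

lemma StrictMonoOn.sub_mul_sub_pos {𝕜 : Type*} [Ring 𝕜] [LinearOrder 𝕜] [IsStrictOrderedRing 𝕜]
    {f : 𝕜 → 𝕜} {s : Set 𝕜} (hf : StrictMonoOn f s) {x y : 𝕜} (hx : x ∈ s) (hy : y ∈ s)
    (hxy : x ≠ y) : 0 < (x - y) * (f x - f y) := by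
  rcases hxy.lt_or_gt with h | h
  · exact mul_pos_of_neg_of_neg (sub_neg.2 h) (sub_neg.2 (hf hx hy h))
  · exact mul_pos (sub_pos.2 h) (sub_pos.2 (hf hy hx h))

section OrthonormalOuterProducts

variable {ι κ R : Type*} [Fintype ι] [DecidableEq κ] [CommRing R] [StarRing R] {e : κ → ι → R}

lemma vecMulVec_mul_vecMulVec_of_orthonormal
    (he : ∀ i j, star (e i) ⬝ᵥ e j = if i = j then 1 else 0) (i j k l : κ) :
    vecMulVec (e i) (star (e j)) * vecMulVec (e k) (star (e l))
      = if j = k then vecMulVec (e i) (star (e l)) else 0 := by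
  rw [vecMulVec_mul_vecMulVec, he]
  split_ifs <;> simp

variable [Fintype κ]

lemma vecMulVec_mul_sum_smul_vecMulVec
    (he : ∀ i j, star (e i) ⬝ᵥ e j = if i = j then 1 else 0) (f : κ → R) (k l : κ) :
    vecMulVec (e k) (star (e l)) * ∑ i, f i • vecMulVec (e i) (star (e i))
      = f l • vecMulVec (e k) (star (e l)) := by
  simp [Finset.mul_sum, vecMulVec_mul_vecMulVec_of_orthonormal he]

lemma sum_smul_vecMulVec_mul_vecMulVec
    (he : ∀ i j, star (e i) ⬝ᵥ e j = if i = j then 1 else 0) (f : κ → R) (k l : κ) :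
    (∑ i, f i • vecMulVec (e i) (star (e i))) * vecMulVec (e k) (star (e l))
      = f k • vecMulVec (e k) (star (e l)) := by
  simp [Finset.sum_mul, vecMulVec_mul_vecMulVec_of_orthonormal he]

lemma trace_commutator_mul_mul_of_orthonormal
    (he : ∀ i j, star (e i) ⬝ᵥ e j = if i = j then 1 else 0) {k l : κ} (hkl : k ≠ l)
    (f g : κ → R) :
    let X := vecMulVec (e k) (star (e l)) + vecMulVec (e l) (star (e k))
    let D := fun h : κ → R => ∑ i, h i • vecMulVec (e i) (star (e i))
    trace ((X * D f - D f * X) * D g * X) = (f l - f k) * (g l - g k) := by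
  intro X D
  have hcomm : X * D f - D f * X
      = (f l - f k) • (vecMulVec (e k) (star (e l)) - vecMulVec (e l) (star (e k))) := by
    simp only [X, D, add_mul, mul_add, vecMulVec_mul_sum_smul_vecMulVec he,
      sum_smul_vecMulVec_mul_vecMulVec he]
    module
  have hprod : (X * D f - D f * X) * D g * X = (f l - f k) •
      (g l • vecMulVec (e k) (star (e k)) - g k • vecMulVec (e l) (star (e l))) := by
    rw [hcomm]
    simp only [X, D, smul_mul_assoc, sub_mul, mul_add, smul_sub,
      vecMulVec_mul_sum_smul_vecMulVec he, vecMulVec_mul_vecMulVec_of_orthonormal he,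
      if_neg hkl, if_neg hkl.symm, if_pos, smul_zero, sub_zero, zero_sub]
    abel
  have hnorm : ∀ i, e i ⬝ᵥ star (e i) = 1 := fun i => by rw [dotProduct_comm, he, if_pos rfl]
  rw [hprod, trace_smul, trace_sub, trace_smul, trace_smul, trace_vecMulVec, trace_vecMulVec,
    hnorm, hnorm, smul_eq_mul, smul_eq_mul, smul_eq_mul, mul_one, mul_one]

end OrthonormalOuterProducts

theorem stmt_12_general {n : ℕ} (ρ : Matrix (Fin n) (Fin n) ℂ)
    (r : Fin n → ℝ) (e : Fin n → (Fin n → ℂ))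
    (he : ∀ i j, star (e i) ⬝ᵥ e j = if i = j then (1 : ℂ) else 0)
    (hρd : ρ = ∑ i, (r i : ℂ) • vecMulVec (e i) (star (e i)))
    (hrpos : ∀ i, 0 < r i)
    (L : Matrix (Fin n) (Fin n) ℂ)
    (hL : L = ∑ i, (Real.log (r i) : ℂ) • vecMulVec (e i) (star (e i)))
    (hdistinct : ∃ k l, r k ≠ r l) :
    ∃ X : Matrix (Fin n) (Fin n) ℂ, Xᴴ = X
      ∧ (Matrix.trace ((X * ρ - ρ * X) * L * X)).im = 0
      ∧ 0 < (Matrix.trace ((X * ρ - ρ * X) * L * X)).re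
      ∧ ∃ k l, r k ≠ r l ∧ ∃ a b c d : ℂ,
          X = a • vecMulVec (e k) (star (e k)) + b • vecMulVec (e k) (star (e l))
            + c • vecMulVec (e l) (star (e k)) + d • vecMulVec (e l) (star (e l)) := by
  obtain ⟨k, l, hrkl⟩ := hdistinct
  have hkl : k ≠ l := fun h => hrkl (congrArg r h)
  set X := vecMulVec (e k) (star (e l)) + vecMulVec (e l) (star (e k)) with hX
  have htr : trace ((X * ρ - ρ * X) * L * X)
      = (((r l - r k) * (Real.log (r l) - Real.log (r k)) : ℝ) : ℂ) := by
    rw [hρd, hL, hX, trace_commutator_mul_mul_of_orthonormal he hkl]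
    push_cast
    rfl
  have hpos : 0 < (r l - r k) * (Real.log (r l) - Real.log (r k)) :=
    Real.strictMonoOn_log.sub_mul_sub_pos (hrpos l) (hrpos k) (Ne.symm hrkl)
  refine ⟨X, ?_, by rw [htr, Complex.ofReal_im], by rwa [htr, Complex.ofReal_re],
    k, l, hrkl, 0, 1, 1, 0, by simp [X]⟩
  simp [X, add_comm]

/-- If `ρ = ∑ i, r i • |e i⟩⟨e i|` is a positive definite Hermitian `n × n`
matrix (`n ≥ 2`) with at least two distinct eigenvalues, then there is a Hermitian `X`
with `Tr[[X,ρ] (ln ρ) X] > 0` (in particular real); moreover `X` can be chosen supported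
on the two-dimensional span of two eigenvectors of `ρ` with distinct eigenvalues. -/
theorem stmt_12 {n : ℕ} (hn : 2 ≤ n) (ρ : Matrix (Fin n) (Fin n) ℂ)
    (hρ : ρ.PosDef)
    (r : Fin n → ℝ) (e : Fin n → (Fin n → ℂ))
    (he : ∀ i j, star (e i) ⬝ᵥ e j = if i = j then (1 : ℂ) else 0)
    (hρd : ρ = ∑ i, (r i : ℂ) • vecMulVec (e i) (star (e i)))
    (hrpos : ∀ i, 0 < r i)
    (L : Matrix (Fin n) (Fin n) ℂ)
    (hL : L = ∑ i, (Real.log (r i) : ℂ) • vecMulVec (e i) (star (e i)))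
    (hdistinct : ∃ k l, r k ≠ r l) :
    ∃ X : Matrix (Fin n) (Fin n) ℂ, Xᴴ = X
      ∧ (Matrix.trace ((X * ρ - ρ * X) * L * X)).im = 0
      ∧ 0 < (Matrix.trace ((X * ρ - ρ * X) * L * X)).re
      ∧ ∃ k l, r k ≠ r l ∧ ∃ a b c d : ℂ,
          X = a • vecMulVec (e k) (star (e k)) + b • vecMulVec (e k) (star (e l))
            + c • vecMulVec (e l) (star (e k)) + d • vecMulVec (e l) (star (e l)) :=
  stmt_12_general ρ r e he hρd hrpos L hL hdistinct
end

section
/- Let π be a Borel probability measure on the set of density matrices on ℂ^n, and let ρ̄ = ∫ ρ dπ(ρ) (Bochner integral), which is itself a density matrix. Let E_1, …, E_m be positive semidefinite matrices with Σ_i E_i = I (a POVM), let R_1, …, R_m be real-valued functions on the set of density matrices, and define R(ρ:σ) = Σ_{i=1}^m Tr(E_i ρ) R_i(σ). Suppose R is strictly proper: R(ρ:ρ) > R(ρ:σ) for all density matrices ρ and all σ ≠ ρ. Then for every density matrix σ, ∫ R(ρ:σ) dπ(ρ) = R(ρ̄:σ), and consequently the expected reward ∫ R(ρ:σ) dπ(ρ)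 is uniquely maximized over density matrices σ at σ = ρ̄. -/
open Matrix BigOperators ComplexOrder MeasureTheory

/-- Let `π` be a (Borel) probability measure on the set of density matrices
on `ℂ^n` — represented as the law of a random density matrix `ρ : Ω → Mₙ(ℂ)` — and let
`ρ̄ = ∫ ρ dπ` (Bochner integral, here taken entrywise), itself a density matrix.  Let
`{E i}` be a POVM, `R i` real functions on matrices, and
`R(ρ:σ) = ∑ i, Tr(E i ρ) * R i σ` a strictly proper scoring rule
(`R(ρ:ρ) > R(ρ:σ)` for all density matrices `ρ` and `σ ≠ ρ`).  Then for every density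
matrix `σ`, `∫ R(ρ:σ) dπ = R(ρ̄:σ)`, and consequently `∫ R(ρ:σ) dπ` is uniquely
maximized over density matrices `σ` at `σ = ρ̄`. -/
theorem stmt_14 {n m : ℕ} {Ω : Type*} [MeasurableSpace Ω]
    (π : Measure Ω) [IsProbabilityMeasure π]
    (ρ : Ω → Matrix (Fin n) (Fin n) ℂ)
    (hρ : ∀ ω, (ρ ω).PosSemidef ∧ (ρ ω).trace = 1)
    (hint : ∀ a b, Integrable (fun ω => ρ ω a b) π)
    (ρbar : Matrix (Fin n) (Fin n) ℂ)
    (hρbar : ρbar = Matrix.of fun a b => ∫ ω, ρ ω a b ∂π)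
    (E : Fin m → Matrix (Fin n) (Fin n) ℂ)
    (hE : ∀ i, (E i).PosSemidef) (hEsum : ∑ i, E i = 1)
    (R : Fin m → Matrix (Fin n) (Fin n) ℂ → ℝ)
    (hproper : ∀ ρ' σ : Matrix (Fin n) (Fin n) ℂ,
      ρ'.PosSemidef → ρ'.trace = 1 → σ.PosSemidef → σ.trace = 1 → σ ≠ ρ' →
      ∑ i, (Matrix.trace (E i * ρ')).re * R i σ
        < ∑ i, (Matrix.trace (E i * ρ')).re * R i ρ') :
    (ρbar.PosSemidef ∧ ρbar.trace = 1)
    ∧ (∀ σ : Matrix (Fin n) (Fin n) ℂ,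
        ∫ ω, (∑ i, (Matrix.trace (E i * ρ ω)).re * R i σ) ∂π
          = ∑ i, (Matrix.trace (E i * ρbar)).re * R i σ)
    ∧ (∀ σ : Matrix (Fin n) (Fin n) ℂ, σ.PosSemidef → σ.trace = 1 → σ ≠ ρbar →
        ∫ ω, (∑ i, (Matrix.trace (E i * ρ ω)).re * R i σ) ∂π
          < ∫ ω, (∑ i, (Matrix.trace (E i * ρ ω)).re * R i ρbar) ∂π) := by
  -- integrability of trace (M * ρ ω)
  have hTrInt : ∀ M : Matrix (Fin n) (Fin n) ℂ,
      Integrable (fun ω => Matrix.trace (M * ρ ω)) π := by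
    intro M
    simp only [Matrix.trace, Matrix.diag, Matrix.mul_apply]
    exact integrable_finset_sum _ fun a _ =>
      integrable_finset_sum _ fun b _ => (hint b a).const_mul _
  have hTrEq : ∀ M : Matrix (Fin n) (Fin n) ℂ,
      ∫ ω, Matrix.trace (M * ρ ω) ∂π = Matrix.trace (M * ρbar) := by
    intro M
    simp only [Matrix.trace, Matrix.diag_apply, Matrix.mul_apply, hρbar, Matrix.of_apply]
    rw [integral_finset_sum _ (fun a _ =>
      integrable_finset_sum _ fun b _ => (hint b a).const_mul (M a b))]
    refine Finset.sum_congr rfl fun a _ => ?_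
    rw [integral_finset_sum _ (fun b _ => (hint b a).const_mul (M a b))]
    exact Finset.sum_congr rfl fun b _ => integral_const_mul _ _
  have htr1 : ρbar.trace = 1 := by
    have h1 : ∫ ω, Matrix.trace (1 * ρ ω) ∂π = Matrix.trace (1 * ρbar) := hTrEq 1
    simp only [one_mul] at h1
    rw [← h1]
    have : ∀ ω, Matrix.trace (ρ ω) = 1 := fun ω => (hρ ω).2
    simp only [this, integral_const, measure_univ, ENNReal.toReal_one, probReal_univ, one_smul]
  have hpsd : ρbar.PosSemidef := by
    rw [Matrix.posSemidef_iff_dotProduct_mulVec]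
    constructor
    · ext a b
      simp only [Matrix.conjTranspose_apply, hρbar, Matrix.of_apply]
      rw [RCLike.star_def, ← integral_conj]
      refine integral_congr_ae (Filter.Eventually.of_forall fun ω => ?_)
      simpa [RCLike.star_def] using (hρ ω).1.1.apply a b
    · intro x
      have hg : Integrable (fun ω => star x ⬝ᵥ (ρ ω *ᵥ x)) π := by
        simp only [dotProduct, Matrix.mulVec, Pi.star_apply]
        exact integrable_finset_sum _ fun a _ =>
          (integrable_finset_sum _ fun b _ => ((hint a b).mul_const _)).const_mul _
      have heq : ∫ ω, star x ⬝ᵥ (ρ ω *ᵥ x) ∂π = star x ⬝ᵥ (ρbar *ᵥ x) := by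
        simp only [dotProduct, Matrix.mulVec, Pi.star_apply, hρbar, Matrix.of_apply]
        rw [integral_finset_sum _ (fun a _ =>
          (integrable_finset_sum _ fun b _ => ((hint a b).mul_const _)).const_mul _)]
        refine Finset.sum_congr rfl fun a _ => ?_
        rw [integral_const_mul, integral_finset_sum _ (fun b _ => (hint a b).mul_const _)]
        refine congrArg _ (Finset.sum_congr rfl fun b _ => ?_)
        rw [integral_mul_const]
      rw [← heq, Complex.le_def]
      have hnn : ∀ ω, 0 ≤ star x ⬝ᵥ (ρ ω *ᵥ x) := fun ω => (hρ ω).1.dotProduct_mulVec_nonneg x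
      constructor
      · rw [Complex.zero_re, ← RCLike.re_to_complex, ← integral_re hg]
        refine integral_nonneg fun ω => ?_
        simpa [RCLike.re_to_complex, Complex.le_def] using (hnn ω).1
      · rw [Complex.zero_im, ← RCLike.im_to_complex, ← integral_im hg]
        have : ∀ ω, (star x ⬝ᵥ (ρ ω *ᵥ x)).im = 0 := fun ω => ((Complex.le_def.mp (hnn ω)).2).symm
        simp [RCLike.im_to_complex, this]
  have hmain : ∀ σ : Matrix (Fin n) (Fin n) ℂ,
      ∫ ω, (∑ i, (Matrix.trace (E i * ρ ω)).re * R i σ) ∂π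
        = ∑ i, (Matrix.trace (E i * ρbar)).re * R i σ := by
    intro σ
    have hintre : ∀ i : Fin m, Integrable (fun ω => (Matrix.trace (E i * ρ ω)).re) π := by
      intro i
      have := (hTrInt (E i)).re
      simpa [RCLike.re_to_complex] using this
    rw [integral_finset_sum _ (fun i _ => (hintre i).mul_const _)]
    refine Finset.sum_congr rfl fun i _ => ?_
    rw [integral_mul_const]
    congr 1
    have := integral_re (hTrInt (E i))
    simp only [RCLike.re_to_complex] at this
    rw [this, hTrEq]
  refine ⟨⟨hpsd, htr1⟩, hmain, fun σ hσ hσt hne => ?_⟩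
  rw [hmain σ, hmain ρbar]
  exact hproper ρbar σ hpsd htr1 hσ hσt hne
end

section
/- Let π be a Borel probability measure on the set of positive definite density matrices on ℂ^n with mean ρ̄ = ∫ ρ dπ(ρ), and let C ∈ ℝ, D > 0. For a positive definite density matrix σ = Σ_i s_i |f_i⟩⟨f_i|, let R(ρ:σ) = Σ_i ⟨f_i|ρ|f_i⟩ (C + D ln s_i) be the HERS expected reward. Then ∫ R(ρ:σ) dπ(ρ) = C + D·Σ_i ⟨f_i|ρ̄|f_i⟩ ln s_i = K − D·S(ρ̄‖σ), where K = C − D·H(ρ̄) does not depend on σ; hence the expected reward is uniquely maximized over positive definite density matrices σ at σ = ρ̄. -/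
open Matrix BigOperators ComplexOrder MeasureTheory

/-- Gibbs' inequality with equality case. -/
lemma hers_gibbs {n : ℕ} {t s : Fin n → ℝ} (ht : ∀ j, 0 < t j) (hs : ∀ j, 0 < s j)
    (htsum : ∑ j, t j = 1) (hssum : ∑ j, s j = 1) :
    (∑ j, t j * Real.log (s j) ≤ ∑ j, t j * Real.log (t j)) ∧
    ((∑ j, t j * Real.log (s j) = ∑ j, t j * Real.log (t j)) → s = t) := by
  have key : ∀ j : Fin n, t j * Real.log (s j) - t j * Real.log (t j) ≤ s j - t j := by
    intro j
    have h1 : Real.log (s j / t j) ≤ s j / t j - 1 := Real.log_le_sub_one_of_pos (div_pos (hs j) (ht j))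
    have h2 : Real.log (s j / t j) = Real.log (s j) - Real.log (t j) :=
      Real.log_div (hs j).ne' (ht j).ne'
    have h3 : t j * (s j / t j) = s j := mul_div_cancel₀ _ (ht j).ne'
    have h4 := mul_le_mul_of_nonneg_left h1 (ht j).le
    rw [h2, mul_sub, mul_sub, h3] at h4
    linarith
  have keylt : ∀ j : Fin n, s j ≠ t j →
      t j * Real.log (s j) - t j * Real.log (t j) < s j - t j := by
    intro j hne
    have h1 : Real.log (s j / t j) < s j / t j - 1 :=
      Real.log_lt_sub_one_of_pos (div_pos (hs j) (ht j))
        (fun h => hne ((div_eq_one_iff_eq (ht j).ne').mp h))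
    have h2 : Real.log (s j / t j) = Real.log (s j) - Real.log (t j) :=
      Real.log_div (hs j).ne' (ht j).ne'
    have h3 : t j * (s j / t j) = s j := mul_div_cancel₀ _ (ht j).ne'
    have h4 := mul_lt_mul_of_pos_left h1 (ht j)
    rw [h2, mul_sub, mul_sub, h3] at h4
    linarith
  have hsum : ∑ j, (t j * Real.log (s j) - t j * Real.log (t j)) ≤ ∑ j, (s j - t j) :=
    Finset.sum_le_sum fun j _ => key j
  have hzero : ∑ j, (s j - t j) = 0 := by rw [Finset.sum_sub_distrib, htsum, hssum]; ring
  rw [Finset.sum_sub_distrib] at hsum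
  constructor
  · linarith
  · intro heq
    by_contra hne
    obtain ⟨j0, hj0⟩ : ∃ j, s j ≠ t j := by
      by_contra h; push_neg at h; exact hne (funext h)
    have hlt : ∑ j, (t j * Real.log (s j) - t j * Real.log (t j)) < ∑ j, (s j - t j) :=
      Finset.sum_lt_sum (fun j _ => key j) ⟨j0, Finset.mem_univ j0, keylt j0 hj0⟩
    rw [Finset.sum_sub_distrib, hzero] at hlt
    linarith [heq]

/-- Jensen: entropy decreases under doubly stochastic maps. -/
lemma hers_jensen {n : ℕ} (p : Fin n → Fin n → ℝ) (s : Fin n → ℝ)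
    (hp : ∀ i j, 0 ≤ p i j) (hrow : ∀ i, ∑ j, p i j = 1) (hcol : ∀ j, ∑ i, p i j = 1)
    (hs : ∀ j, 0 ≤ s j) :
    ∑ i, (∑ j, p i j * s j) * Real.log (∑ j, p i j * s j)
      ≤ ∑ j, s j * Real.log (s j) := by
  have key : ∀ i, (∑ j, p i j * s j) * Real.log (∑ j, p i j * s j)
      ≤ ∑ j, p i j * (s j * Real.log (s j)) := by
    intro i
    have := Real.convexOn_mul_log.map_sum_le (t := Finset.univ) (w := p i) (p := s)
      (fun j _ => hp i j) (hrow i) (fun j _ => hs j)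
    simpa [smul_eq_mul] using this
  calc ∑ i, (∑ j, p i j * s j) * Real.log (∑ j, p i j * s j)
      ≤ ∑ i, ∑ j, p i j * (s j * Real.log (s j)) := Finset.sum_le_sum fun i _ => key i
    _ = ∑ j, (∑ i, p i j) * (s j * Real.log (s j)) := by
        rw [Finset.sum_comm]; simp [Finset.sum_mul]
    _ = ∑ j, s j * Real.log (s j) := by simp [hcol]

/-- Equality case of `hers_jensen`. -/
lemma hers_jensen_eq {n : ℕ} (p : Fin n → Fin n → ℝ) (s : Fin n → ℝ)
    (hp : ∀ i j, 0 ≤ p i j) (hrow : ∀ i, ∑ j, p i j = 1) (hcol : ∀ j, ∑ i, p i j = 1)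
    (hs : ∀ j, 0 ≤ s j)
    (heq : ∑ i, (∑ j, p i j * s j) * Real.log (∑ j, p i j * s j)
      = ∑ j, s j * Real.log (s j)) :
    ∀ i j, p i j ≠ 0 → s j = ∑ k, p i k * s k := by
  have key : ∀ i, (∑ j, p i j * s j) * Real.log (∑ j, p i j * s j)
      ≤ ∑ j, p i j * (s j * Real.log (s j)) := by
    intro i
    have := Real.convexOn_mul_log.map_sum_le (t := Finset.univ) (w := p i) (p := s)
      (fun j _ => hp i j) (hrow i) (fun j _ => hs j)
    simpa [smul_eq_mul] using this
  have htot : ∑ i, ∑ j, p i j * (s j * Real.log (s j)) = ∑ j, s j * Real.log (s j) := by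
    rw [Finset.sum_comm]
    calc ∑ j, ∑ i, p i j * (s j * Real.log (s j))
        = ∑ j, (∑ i, p i j) * (s j * Real.log (s j)) := by simp [Finset.sum_mul]
      _ = _ := by simp [hcol]
  have hterm : ∀ i ∈ Finset.univ, (fun i => ∑ j, p i j * (s j * Real.log (s j))
      - (∑ j, p i j * s j) * Real.log (∑ j, p i j * s j)) i = 0 := by
    apply (Finset.sum_eq_zero_iff_of_nonneg (fun i _ => sub_nonneg.mpr (key i))).mp
    rw [Finset.sum_sub_distrib, htot, heq, sub_self]
  intro i j hpij
  have hi := hterm i (Finset.mem_univ i)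
  simp only [sub_eq_zero] at hi
  have := (Real.strictConvexOn_mul_log.map_sum_eq_iff' (t := Finset.univ) (w := p i) (p := s)
    (fun j _ => hp i j) (hrow i) (fun j _ => hs j)).mp (by simpa [smul_eq_mul] using hi.symm)
  simpa [smul_eq_mul] using this j (Finset.mem_univ j) hpij

/-- Resolution of the identity for an orthonormal family of `n` vectors in `ℂ^n`. -/
lemma hers_resolution {n : ℕ} (f : Fin n → Fin n → ℂ)
    (hf : ∀ i j, star (f i) ⬝ᵥ f j = if i = j then (1 : ℂ) else 0) :
    ∑ j, vecMulVec (f j) (star (f j)) = (1 : Matrix (Fin n) (Fin n) ℂ) := by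
  classical
  set M : Matrix (Fin n) (Fin n) ℂ := Matrix.of fun i k => f i k with hMdef
  have hM : M * Mᴴ = 1 := by
    ext i j
    have h := hf j i
    simp only [dotProduct, Pi.star_apply] at h
    simp only [Matrix.mul_apply, Matrix.conjTranspose_apply, Matrix.of_apply, Matrix.one_apply, hMdef]
    calc ∑ k, f i k * star (f j k) = ∑ k, star (f j k) * f i k :=
          Finset.sum_congr rfl fun k _ => mul_comm _ _
      _ = if j = i then 1 else 0 := h
      _ = if i = j then 1 else 0 := by by_cases hij : i = j <;> simp [hij, Ne.symm, eq_comm]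
  have hM2 : Mᴴ * M = 1 := mul_eq_one_comm.mp hM
  ext k l
  have h2 : (Mᴴ * M) k l = if k = l then 1 else 0 := by rw [hM2]; simp [Matrix.one_apply]
  simp only [Matrix.mul_apply, Matrix.conjTranspose_apply, Matrix.of_apply, hMdef] at h2
  have h3 := congrArg star h2
  rw [star_sum] at h3
  simp only [star_mul', star_star] at h3
  simp only [Matrix.sum_apply, vecMulVec_apply, Pi.star_apply, Matrix.one_apply]
  rw [h3]
  by_cases hkl : k = l <;> simp [hkl]

/-- mulVec of a spectral decomposition. -/
lemma hers_mulVec {n : ℕ} (r : Fin n → ℝ) (e : Fin n → Fin n → ℂ) (x : Fin n → ℂ) :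
    (∑ i, (r i : ℂ) • vecMulVec (e i) (star (e i))).mulVec x
      = ∑ i, ((r i : ℂ) * (star (e i) ⬝ᵥ x)) • e i := by
  ext a
  simp only [Matrix.mulVec, dotProduct, Finset.sum_apply, Matrix.sum_apply, Matrix.smul_apply,
    vecMulVec_apply, Pi.star_apply, smul_eq_mul, Pi.smul_apply, Finset.sum_mul, Finset.mul_sum]
  rw [Finset.sum_comm]
  exact Finset.sum_congr rfl fun i _ => Finset.sum_congr rfl fun b _ => by ring

/-- quadratic form of a spectral decomposition. -/
lemma hers_quad {n : ℕ} (r : Fin n → ℝ) (e : Fin n → Fin n → ℂ) (x : Fin n → ℂ) :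
    star x ⬝ᵥ (∑ i, (r i : ℂ) • vecMulVec (e i) (star (e i))).mulVec x
      = ∑ i, (r i : ℂ) * ((star x ⬝ᵥ e i) * (star (e i) ⬝ᵥ x)) := by
  rw [hers_mulVec]
  simp only [dotProduct, Finset.sum_apply, Pi.smul_apply, smul_eq_mul, Pi.star_apply,
    Finset.mul_sum]
  rw [Finset.sum_comm]
  refine Finset.sum_congr rfl fun i _ => ?_
  simp only [Finset.sum_mul, Finset.mul_sum]
  rw [Finset.sum_comm]
  exact Finset.sum_congr rfl fun a _ => Finset.sum_congr rfl fun b _ => by ring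

lemma hers_conj {n : ℕ} (e x : Fin n → ℂ) :
    star (e : Fin n → ℂ) ⬝ᵥ x = star (star x ⬝ᵥ e) := by
  simp only [dotProduct, star_sum, star_mul', star_star, Pi.star_apply]
  exact Finset.sum_congr rfl fun k _ => mul_comm _ _

/-- quadratic form with abs². -/
lemma hers_quad_re {n : ℕ} (r : Fin n → ℝ) (e : Fin n → Fin n → ℂ) (x : Fin n → ℂ) :
    star x ⬝ᵥ (∑ i, (r i : ℂ) • vecMulVec (e i) (star (e i))).mulVec x
      = ((∑ i, r i * ‖star x ⬝ᵥ e i‖ ^ 2 : ℝ) : ℂ) := by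
  rw [hers_quad]
  push_cast
  refine Finset.sum_congr rfl fun i _ => ?_
  rw [hers_conj (e i) x, Complex.star_def, Complex.mul_conj, ← Complex.sq_norm]
  push_cast
  ring

/-- Let `π` be a probability measure on the positive definite density
matrices on `ℂ^n` — represented as the law of a random positive definite density matrix
`ρ : Ω → Mₙ(ℂ)` — with mean `ρ̄ = ∫ ρ dπ` (entrywise Bochner integral), having
eigendecomposition `ρ̄ = ∑ i, rbar i • |ebar i⟩⟨ebar i|`.  Let `C ∈ ℝ`, `D > 0`.  For a
positive definite density matrix `σ = ∑ i, s i • |f i⟩⟨f i|`, the expected HERS reward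
`∫ R(ρ:σ) dπ` with `R(ρ:σ) = ∑ i, ⟨f i|ρ|f i⟩ * (C + D ln (s i))` equals
`C + D * ∑ i, ⟨f i|ρ̄|f i⟩ * ln (s i) = K - D * S(ρ̄‖σ)` where `K = C - D * H(ρ̄)`, and
it is uniquely maximized over positive definite density matrices `σ` at `σ = ρ̄` (with
maximum value `C + D * ∑ i, rbar i * ln (rbar i)`). -/
theorem stmt_15 {n : ℕ} {Ω : Type*} [MeasurableSpace Ω]
    (π : Measure Ω) [IsProbabilityMeasure π]
    (ρ : Ω → Matrix (Fin n) (Fin n) ℂ)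
    (hρ : ∀ ω, (ρ ω).PosDef ∧ (ρ ω).trace = 1)
    (hint : ∀ a b, Integrable (fun ω => ρ ω a b) π)
    (ρbar : Matrix (Fin n) (Fin n) ℂ)
    (hρbar : ρbar = Matrix.of fun a b => ∫ ω, ρ ω a b ∂π)
    (rbar : Fin n → ℝ) (ebar : Fin n → (Fin n → ℂ))
    (hebar : ∀ i j, star (ebar i) ⬝ᵥ ebar j = if i = j then (1 : ℂ) else 0)
    (hρbard : ρbar = ∑ i, (rbar i : ℂ) • vecMulVec (ebar i) (star (ebar i)))
    (C D : ℝ) (hD : 0 < D) :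
    ∀ (σ : Matrix (Fin n) (Fin n) ℂ) (s : Fin n → ℝ) (f : Fin n → (Fin n → ℂ)),
      (∀ i j, star (f i) ⬝ᵥ f j = if i = j then (1 : ℂ) else 0) →
      σ = ∑ i, (s i : ℂ) • vecMulVec (f i) (star (f i)) →
      (∀ i, 0 < s i) → σ.trace = 1 →
      (∫ ω, (∑ i, (star (f i) ⬝ᵥ (ρ ω).mulVec (f i)).re * (C + D * Real.log (s i))) ∂π
          = C + D * ∑ i, (star (f i) ⬝ᵥ ρbar.mulVec (f i)).re * Real.log (s i))
      ∧ (C + D * ∑ i, (star (f i) ⬝ᵥ ρbar.mulVec (f i)).re * Real.log (s i)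
          = (C - D * (-∑ i, rbar i * Real.log (rbar i)))
            - D * ((∑ i, rbar i * Real.log (rbar i))
              - ∑ i, ∑ j, rbar i * ‖star (f j) ⬝ᵥ ebar i‖ ^ 2
                  * Real.log (s j)))
      ∧ (C + D * ∑ i, (star (f i) ⬝ᵥ ρbar.mulVec (f i)).re * Real.log (s i)
          ≤ C + D * ∑ i, rbar i * Real.log (rbar i))
      ∧ ((C + D * ∑ i, (star (f i) ⬝ᵥ ρbar.mulVec (f i)).re * Real.log (s i)
          = C + D * ∑ i, rbar i * Real.log (rbar i)) ↔ σ = ρbar) := by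
  classical
  intro σ s f hf hσd hs hσtr
  -- abbreviation for overlap coefficients
  have habs : ∀ (u v : Fin n → ℂ), ‖star u ⬝ᵥ v‖ = ‖star v ⬝ᵥ u‖ := by
    intro u v
    rw [hers_conj u v, show star (star v ⬝ᵥ u) = (starRingEnd ℂ) (star v ⬝ᵥ u) from rfl,
      Complex.norm_conj]
  -- expectation of quadratic forms
  have hexp : ∀ x : Fin n → ℂ,
      Integrable (fun ω => star x ⬝ᵥ (ρ ω).mulVec x) π ∧
      ∫ ω, star x ⬝ᵥ (ρ ω).mulVec x ∂π = star x ⬝ᵥ ρbar.mulVec x := by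
    intro x
    have hrw : ∀ M : Matrix (Fin n) (Fin n) ℂ,
        star x ⬝ᵥ M.mulVec x = ∑ a, ∑ b, star (x a) * M a b * x b := by
      intro M
      simp only [dotProduct, Matrix.mulVec, Pi.star_apply, Finset.mul_sum]
      exact Finset.sum_congr rfl fun a _ => Finset.sum_congr rfl fun b _ => by ring
    have hi : Integrable (fun ω => ∑ a, ∑ b, star (x a) * ρ ω a b * x b) π := by
      apply integrable_finset_sum
      intro a _
      apply integrable_finset_sum
      intro b _
      exact ((hint a b).const_mul _).mul_const _
    constructor
    · have : (fun ω => star x ⬝ᵥ (ρ ω).mulVec x)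
          = fun ω => ∑ a, ∑ b, star (x a) * ρ ω a b * x b := funext fun ω => hrw (ρ ω)
      rw [this]; exact hi
    · calc ∫ ω, star x ⬝ᵥ (ρ ω).mulVec x ∂π
          = ∫ ω, ∑ a, ∑ b, star (x a) * ρ ω a b * x b ∂π := by
            simp only [hrw]
        _ = ∑ a, ∑ b, star (x a) * (∫ ω, ρ ω a b ∂π) * x b := by
            rw [integral_finset_sum _ (fun a _ => integrable_finset_sum _
              (fun b _ => ((hint a b).const_mul _).mul_const _))]
            refine Finset.sum_congr rfl fun a _ => ?_
            rw [integral_finset_sum _ (fun b _ => ((hint a b).const_mul _).mul_const _)]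
            refine Finset.sum_congr rfl fun b _ => ?_
            rw [integral_mul_const, integral_const_mul]
        _ = star x ⬝ᵥ ρbar.mulVec x := by
            rw [hrw, hρbar]
            rfl
  have hre : ∀ x : Fin n → ℂ,
      Integrable (fun ω => (star x ⬝ᵥ (ρ ω).mulVec x).re) π := by
    intro x
    have := (hexp x).1.re
    simpa using this
  have hreint : ∀ x : Fin n → ℂ,
      ∫ ω, (star x ⬝ᵥ (ρ ω).mulVec x).re ∂π = (star x ⬝ᵥ ρbar.mulVec x).re := by
    intro x
    have h := integral_re (hexp x).1
    simp only [RCLike.re_to_complex] at h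
    rw [h, (hexp x).2]
  -- positivity
  have hpos : ∀ x : Fin n → ℂ, x ≠ 0 → 0 < (star x ⬝ᵥ ρbar.mulVec x).re := by
    intro x hx
    have h1 : ∀ ω, 0 < (star x ⬝ᵥ (ρ ω).mulVec x).re := by
      intro ω
      have h2 := (hρ ω).1.dotProduct_mulVec_pos hx
      rw [Complex.lt_def] at h2
      simpa using h2.1
    have h3 : (0:ℝ) < ∫ ω, (star x ⬝ᵥ (ρ ω).mulVec x).re ∂π := by
      rw [integral_pos_iff_support_of_nonneg (fun ω => (h1 ω).le) (hre x)]
      have h4 : Function.support (fun ω => (star x ⬝ᵥ (ρ ω).mulVec x).re) = Set.univ :=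
        Set.eq_univ_of_forall fun ω => (h1 ω).ne'
      rw [h4]
      simp
    rwa [hreint x] at h3
  -- nonvanishing of orthonormal vectors
  have hf0 : ∀ j, f j ≠ 0 := by
    intro j h
    have := hf j j
    simp [h] at this
  have he0 : ∀ i, ebar i ≠ 0 := by
    intro i h
    have := hebar i i
    simp [h] at this
  -- quadratic form of ρbar in its own eigenbasis
  have hrbar_eq : ∀ i, star (ebar i) ⬝ᵥ ρbar.mulVec (ebar i) = (rbar i : ℂ) := by
    intro i
    rw [hρbard, hers_quad]
    rw [Finset.sum_eq_single i]
    · rw [hebar i i]; simp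
    · intro k _ hk
      rw [hebar i k, hebar k i]
      simp [hk, Ne.symm hk]
    · simp
  have hr_pos : ∀ i, 0 < rbar i := by
    intro i
    have := hpos (ebar i) (he0 i)
    rwa [hrbar_eq i, Complex.ofReal_re] at this
  -- t in terms of rbar and p
  have ht_eq : ∀ j, (star (f j) ⬝ᵥ ρbar.mulVec (f j)).re
      = ∑ i, rbar i * ‖star (f j) ⬝ᵥ ebar i‖ ^ 2 := by
    intro j
    rw [hρbard, hers_quad_re, Complex.ofReal_re]
  have ht_pos : ∀ j, 0 < (star (f j) ⬝ᵥ ρbar.mulVec (f j)).re := fun j => hpos (f j) (hf0 j)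
  -- completeness
  have hcompl : ∀ (e : Fin n → Fin n → ℂ),
      (∀ i j, star (e i) ⬝ᵥ e j = if i = j then (1:ℂ) else 0) →
      ∀ v : Fin n → ℂ, ∑ i, (star (e i) ⬝ᵥ v) • e i = v := by
    intro e he v
    have h1 := hers_mulVec (fun _ => (1:ℝ)) e v
    simp only [Complex.ofReal_one, one_smul, one_mul] at h1
    rw [← h1, hers_resolution e he, Matrix.one_mulVec]
  -- double stochasticity
  have hrow : ∀ i, ∑ j, ‖star (f j) ⬝ᵥ ebar i‖ ^ 2 = 1 := by
    intro i
    have h1 := hers_quad_re (fun _ => (1:ℝ)) f (ebar i)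
    simp only [Complex.ofReal_one, one_smul, one_mul] at h1
    rw [hers_resolution f hf, Matrix.one_mulVec, hebar i i, if_pos rfl] at h1
    have h2 : ∑ j, ‖star (ebar i) ⬝ᵥ f j‖ ^ 2 = 1 := by exact_mod_cast h1.symm
    rw [← h2]
    exact Finset.sum_congr rfl fun j _ => by rw [habs (f j) (ebar i)]
  have hcol : ∀ j, ∑ i, ‖star (f j) ⬝ᵥ ebar i‖ ^ 2 = 1 := by
    intro j
    have h1 := hers_quad_re (fun _ => (1:ℝ)) ebar (f j)
    simp only [Complex.ofReal_one, one_smul, one_mul] at h1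
    rw [hers_resolution ebar hebar, Matrix.one_mulVec, hf j j, if_pos rfl] at h1
    exact_mod_cast h1.symm
  -- trace facts
  have htrρbar : ρbar.trace = 1 := by
    rw [hρbar]
    have h1 : (Matrix.of fun a b => ∫ ω, ρ ω a b ∂π).trace = ∫ ω, (ρ ω).trace ∂π := by
      unfold Matrix.trace
      simp only [Matrix.diag_apply, Matrix.of_apply]
      rw [← integral_finset_sum _ (fun a _ => hint a a)]
    rw [h1]
    have h2 : (fun ω => (ρ ω).trace) = fun _ => (1:ℂ) := funext fun ω => (hρ ω).2
    rw [h2, integral_const]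
    simp
  have htrace_decomp : ∀ (r : Fin n → ℝ) (e : Fin n → Fin n → ℂ),
      (∀ i j, star (e i) ⬝ᵥ e j = if i = j then (1:ℂ) else 0) →
      (∑ i, (r i : ℂ) • vecMulVec (e i) (star (e i))).trace = ((∑ i, r i : ℝ) : ℂ) := by
    intro r e he
    rw [Matrix.trace_sum]
    push_cast
    refine Finset.sum_congr rfl fun i _ => ?_
    rw [Matrix.trace_smul]
    have h1 : (vecMulVec (e i) (star (e i))).trace = 1 := by
      have h2 := he i i
      rw [if_pos rfl] at h2
      simp only [dotProduct, Pi.star_apply] at h2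
      unfold Matrix.trace
      simp only [Matrix.diag_apply, vecMulVec_apply, Pi.star_apply]
      rw [← h2]
      exact Finset.sum_congr rfl fun k _ => mul_comm _ _
    rw [h1, smul_eq_mul, mul_one]
  have hrsum : ∑ i, rbar i = 1 := by
    have h1 := htrace_decomp rbar ebar hebar
    rw [← hρbard, htrρbar] at h1
    exact_mod_cast h1.symm
  have hssum : ∑ j, s j = 1 := by
    have h1 := htrace_decomp s f hf
    rw [← hσd, hσtr] at h1
    exact_mod_cast h1.symm
  have htsum : ∑ j, (star (f j) ⬝ᵥ ρbar.mulVec (f j)).re = 1 := by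
    calc ∑ j, (star (f j) ⬝ᵥ ρbar.mulVec (f j)).re
        = ∑ j, ∑ i, rbar i * ‖star (f j) ⬝ᵥ ebar i‖ ^ 2 := by
          exact Finset.sum_congr rfl fun j _ => ht_eq j
      _ = ∑ i, rbar i * ∑ j, ‖star (f j) ⬝ᵥ ebar i‖ ^ 2 := by
          rw [Finset.sum_comm]
          exact Finset.sum_congr rfl fun i _ => (Finset.mul_sum _ _ _).symm
      _ = 1 := by
          rw [Finset.sum_congr rfl fun i _ => by rw [hrow i, mul_one]]
          exact hrsum
  -- Part 1
  have part1 : ∫ ω, (∑ j, (star (f j) ⬝ᵥ (ρ ω).mulVec (f j)).re * (C + D * Real.log (s j))) ∂π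
      = C + D * ∑ j, (star (f j) ⬝ᵥ ρbar.mulVec (f j)).re * Real.log (s j) := by
    rw [integral_finset_sum _ (fun j _ => (hre (f j)).mul_const _)]
    have h1 : ∀ j : Fin n,
        ∫ ω, (star (f j) ⬝ᵥ (ρ ω).mulVec (f j)).re * (C + D * Real.log (s j)) ∂π
        = (star (f j) ⬝ᵥ ρbar.mulVec (f j)).re * (C + D * Real.log (s j)) := by
      intro j
      rw [integral_mul_const, hreint (f j)]
    rw [Finset.sum_congr rfl fun j _ => h1 j]
    have h2 : ∑ j, (star (f j) ⬝ᵥ ρbar.mulVec (f j)).re * (C + D * Real.log (s j))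
        = C * (∑ j, (star (f j) ⬝ᵥ ρbar.mulVec (f j)).re)
          + D * ∑ j, (star (f j) ⬝ᵥ ρbar.mulVec (f j)).re * Real.log (s j) := by
      rw [Finset.mul_sum, Finset.mul_sum, ← Finset.sum_add_distrib]
      exact Finset.sum_congr rfl fun j _ => by ring
    rw [h2, htsum]
    ring
  -- key rewriting: ∑ t log s = double sum
  have hB : ∑ j, (star (f j) ⬝ᵥ ρbar.mulVec (f j)).re * Real.log (s j)
      = ∑ i, ∑ j, rbar i * ‖star (f j) ⬝ᵥ ebar i‖ ^ 2 * Real.log (s j) := by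
    rw [Finset.sum_comm]
    refine Finset.sum_congr rfl fun j _ => ?_
    rw [ht_eq j, Finset.sum_mul]
  -- main inequality chain
  have hgibbs := hers_gibbs ht_pos hs htsum hssum
  have hteq2 : ∀ j, ∑ i, ‖star (f j) ⬝ᵥ ebar i‖ ^ 2 * rbar i
      = (star (f j) ⬝ᵥ ρbar.mulVec (f j)).re := by
    intro j
    rw [ht_eq j]
    exact Finset.sum_congr rfl fun i _ => mul_comm _ _
  have hjen : ∑ j, (star (f j) ⬝ᵥ ρbar.mulVec (f j)).re
        * Real.log ((star (f j) ⬝ᵥ ρbar.mulVec (f j)).re)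
      ≤ ∑ i, rbar i * Real.log (rbar i) := by
    have h1 := hers_jensen (fun j i => ‖star (f j) ⬝ᵥ ebar i‖ ^ 2) rbar
      (fun j i => by positivity) (fun j => hcol j) (fun i => hrow i) (fun i => (hr_pos i).le)
    simpa only [hteq2] using h1
  have hineq : ∑ j, (star (f j) ⬝ᵥ ρbar.mulVec (f j)).re * Real.log (s j)
      ≤ ∑ i, rbar i * Real.log (rbar i) := le_trans hgibbs.1 hjen
  refine ⟨part1, ?_, ?_, ?_⟩
  · rw [hB]; ring
  · nlinarith [hineq, hD.le]
  · constructor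
    · -- equality ⇒ σ = ρbar
      intro heq
      have h0 : ∑ j, (star (f j) ⬝ᵥ ρbar.mulVec (f j)).re * Real.log (s j)
          = ∑ i, rbar i * Real.log (rbar i) := by
        have h1 : D * (∑ j, (star (f j) ⬝ᵥ ρbar.mulVec (f j)).re * Real.log (s j))
            = D * ∑ i, rbar i * Real.log (rbar i) := by linarith
        exact mul_left_cancel₀ hD.ne' h1
      have heq1 : ∑ j, (star (f j) ⬝ᵥ ρbar.mulVec (f j)).re * Real.log (s j)
          = ∑ j, (star (f j) ⬝ᵥ ρbar.mulVec (f j)).re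
              * Real.log ((star (f j) ⬝ᵥ ρbar.mulVec (f j)).re) :=
        le_antisymm hgibbs.1 (by rw [h0]; exact hjen)
      have hst : s = fun j => (star (f j) ⬝ᵥ ρbar.mulVec (f j)).re := hgibbs.2 heq1
      have heq2 : ∑ j, (star (f j) ⬝ᵥ ρbar.mulVec (f j)).re
            * Real.log ((star (f j) ⬝ᵥ ρbar.mulVec (f j)).re)
          = ∑ i, rbar i * Real.log (rbar i) := by rw [← heq1, h0]
      have hkey := hers_jensen_eq (fun j i => ‖star (f j) ⬝ᵥ ebar i‖ ^ 2) rbar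
        (fun j i => by positivity) (fun j => hcol j) (fun i => hrow i) (fun i => (hr_pos i).le)
        (by simpa only [hteq2] using heq2)
      -- hkey : ∀ j i, p i j ≠ 0 → rbar i = ∑ k, p k j * rbar k = t j
      have hrs : ∀ i j, ‖star (f j) ⬝ᵥ ebar i‖ ^ 2 ≠ 0 → rbar i = s j := by
        intro i j hne
        have h1 := hkey j i hne
        rw [hteq2 j] at h1
        rw [h1, congrFun hst j]
      -- ρbar acts on f j as s j
      have hρf : ∀ j, ρbar.mulVec (f j) = ((s j : ℝ) : ℂ) • f j := by
        intro j
        rw [hρbard, hers_mulVec]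
        have hterm : ∀ i : Fin n, ((rbar i : ℂ) * (star (ebar i) ⬝ᵥ f j)) • ebar i
            = ((s j : ℂ) * (star (ebar i) ⬝ᵥ f j)) • ebar i := by
          intro i
          by_cases hz : star (f j) ⬝ᵥ ebar i = 0
          · have h2 : star (ebar i) ⬝ᵥ f j = 0 := by
              rw [hers_conj (ebar i) (f j), hz, star_zero]
            simp [h2]
          · have hpij : ‖star (f j) ⬝ᵥ ebar i‖ ^ 2 ≠ 0 :=
              pow_ne_zero 2 (norm_ne_zero_iff.mpr hz)
            rw [hrs i j hpij]
        rw [Finset.sum_congr rfl fun i _ => hterm i]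
        calc ∑ i, ((s j : ℂ) * (star (ebar i) ⬝ᵥ f j)) • ebar i
            = (s j : ℂ) • ∑ i, (star (ebar i) ⬝ᵥ f j) • ebar i := by
              rw [Finset.smul_sum]
              exact Finset.sum_congr rfl fun i _ => (mul_smul _ _ _)
          _ = ((s j : ℝ) : ℂ) • f j := by rw [hcompl ebar hebar (f j)]
      have hσf : ∀ j, σ.mulVec (f j) = ((s j : ℝ) : ℂ) • f j := by
        intro j
        rw [hσd, hers_mulVec]
        rw [Finset.sum_eq_single j]
        · rw [hf j j]; simp
        · intro k _ hk
          rw [hf k j]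
          simp [hk]
        · simp
      have hmv : ∀ v, σ.mulVec v = ρbar.mulVec v := by
        intro v
        have hv := hcompl f hf v
        have hlin : ∀ (A : Matrix (Fin n) (Fin n) ℂ),
            A.mulVec (∑ j, (star (f j) ⬝ᵥ v) • f j)
              = ∑ j, (star (f j) ⬝ᵥ v) • A.mulVec (f j) := by
          intro A
          ext a
          simp only [Matrix.mulVec, dotProduct, Finset.sum_apply, Pi.smul_apply, smul_eq_mul,
            Finset.mul_sum]
          rw [Finset.sum_comm]
          exact Finset.sum_congr rfl fun j _ => Finset.sum_congr rfl fun b _ => by ring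
        calc σ.mulVec v = σ.mulVec (∑ j, (star (f j) ⬝ᵥ v) • f j) := by rw [hv]
          _ = ∑ j, (star (f j) ⬝ᵥ v) • σ.mulVec (f j) := hlin σ
          _ = ∑ j, (star (f j) ⬝ᵥ v) • ρbar.mulVec (f j) := by
              exact Finset.sum_congr rfl fun j _ => by rw [hσf j, hρf j]
          _ = ρbar.mulVec (∑ j, (star (f j) ⬝ᵥ v) • f j) := (hlin ρbar).symm
          _ = ρbar.mulVec v := by rw [hv]
      ext a b
      have h3 := congrFun (hmv (Pi.single b 1)) a
      simpa using h3
    · -- σ = ρbar ⇒ equality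
      intro hσρ
      have hts : ∀ j, (star (f j) ⬝ᵥ ρbar.mulVec (f j)).re = s j := by
        intro j
        rw [← hσρ, hσd, hers_quad]
        rw [Finset.sum_eq_single j]
        · rw [hf j j]
          simp
        · intro k _ hk
          rw [hf j k, hf k j]
          simp [hk, Ne.symm hk]
        · simp
      have hrs2 : ∀ i, rbar i = ∑ j, ‖star (f j) ⬝ᵥ ebar i‖ ^ 2 * s j := by
        intro i
        have h1 : star (ebar i) ⬝ᵥ σ.mulVec (ebar i)
            = ((∑ j, s j * ‖star (ebar i) ⬝ᵥ f j‖ ^ 2 : ℝ) : ℂ) := by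
          rw [hσd, hers_quad_re]
        rw [hσρ, hrbar_eq i] at h1
        have h2 : rbar i = ∑ j, s j * ‖star (ebar i) ⬝ᵥ f j‖ ^ 2 := by
          exact_mod_cast h1
        rw [h2]
        exact Finset.sum_congr rfl fun j _ => by rw [habs (ebar i) (f j)]; ring
      have hle1 : ∑ j, s j * Real.log (s j) ≤ ∑ i, rbar i * Real.log (rbar i) := by
        have h1 := hineq
        simp only [hts] at h1
        exact h1
      have hle2 : ∑ i, rbar i * Real.log (rbar i) ≤ ∑ j, s j * Real.log (s j) := by
        have h1 := hers_jensen (fun i j => ‖star (f j) ⬝ᵥ ebar i‖ ^ 2) s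
          (fun i j => by positivity) (fun i => hrow i) (fun j => hcol j) (fun j => (hs j).le)
        simpa only [← hrs2] using h1
      have h2 : ∑ j, s j * Real.log (s j) = ∑ i, rbar i * Real.log (rbar i) :=
        le_antisymm hle1 hle2
      have h3 : ∑ j, (star (f j) ⬝ᵥ ρbar.mulVec (f j)).re * Real.log (s j)
          = ∑ j, s j * Real.log (s j) := by
        exact Finset.sum_congr rfl fun j _ => by rw [hts j]
      rw [h3, h2]
end

section
/- (Bayesian estimation is optimal) Let π₀ be a Borel probability measure on the set of density matrices on ℂ^n. Let {M_j}_{j=1}^J be a finite set of possible measurement records, where each record M_j has conditional probability p(M_j|ρ) given the state ρ, with p(M_j|ρ) = Π_{k=1}^{N} Tr(E^{(j)}_k ρ) a product of Born-rule probabilities for positive semidefinite operators E^{(j)}_k, and Σ_j p(M_j|ρ) = 1 for every density matrix ρ. Let R(ρ:σ) = Σ_i Tr(F_i ρ) R_i(σ) be a strictly proper scoring rule (R(ρ:ρ) > R(ρ:σ) for σ ≠ ρ, with {F_i} a POVM). For each j with p_j := ∫ p(M_j|ρ) dπ₀(ρ) > 0, define the posterior mean ρ̄_j = (1/p_j) ∫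 ρ p(M_j|ρ) dπ₀(ρ). Then for any assignment of reports j ↦ σ_j, the total expected reward Σ_j ∫ R(ρ:σ_j) p(M_j|ρ) dπ₀(ρ) equals Σ_j p_j R(ρ̄_j:σ_j), and it is uniquely maximized (over all assignments with p_j > 0) by choosing σ_j = ρ̄_j for every such j. -/
open Matrix BigOperators ComplexOrder MeasureTheory

lemma psdTraceNonneg {n : ℕ} {A : Matrix (Fin n) (Fin n) ℂ} (hA : A.PosSemidef) :
    0 ≤ A.trace := by
  rw [Matrix.trace]
  apply Finset.sum_nonneg
  intro a _
  have h := hA.dotProduct_mulVec_nonneg (Pi.single a 1)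
  simpa [Matrix.mulVec, dotProduct, Pi.single_apply, Finset.mul_sum] using h

open scoped MatrixOrder in
lemma psdTraceMulNonneg {n : ℕ} {A B : Matrix (Fin n) (Fin n) ℂ}
    (hA : A.PosSemidef) (hB : B.PosSemidef) : 0 ≤ (A * B).trace := by
  have hS : CFC.sqrt B * CFC.sqrt B = B := CFC.sqrt_mul_sqrt_self B hB.nonneg
  have h1 : A * B = A * CFC.sqrt B * CFC.sqrt B := by rw [mul_assoc, hS]
  rw [h1, Matrix.trace_mul_cycle]
  have h2 : (CFC.sqrt B * A * CFC.sqrt B).PosSemidef := by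
    have := hA.conjTranspose_mul_mul_same (CFC.sqrt B)
    rwa [(CFC.sqrt_nonneg B).posSemidef.1.eq] at this
  exact psdTraceNonneg h2

lemma quadFormEqTrace {n : ℕ} (M : Matrix (Fin n) (Fin n) ℂ) (x : Fin n → ℂ) :
    star x ⬝ᵥ M.mulVec x = ((Matrix.vecMulVec x (star x)) * M).trace := by
  simp only [Matrix.trace, Matrix.diag, Matrix.mul_apply, Matrix.vecMulVec_apply,
    dotProduct, Matrix.mulVec, Pi.star_apply, Finset.mul_sum]
  rw [Finset.sum_comm]
  congr 1; funext i; congr 1; funext j; ring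

lemma psdSmul {n : ℕ} {A : Matrix (Fin n) (Fin n) ℂ} (hA : A.PosSemidef) {r : ℝ}
    (hr : 0 ≤ r) : ((r : ℂ) • A).PosSemidef := by
  refine Matrix.PosSemidef.of_dotProduct_mulVec_nonneg ?_ ?_
  · unfold Matrix.IsHermitian
    rw [Matrix.conjTranspose_smul, hA.1.eq]
    congr 1
    rw [RCLike.star_def, Complex.conj_ofReal]
  · intro x
    rw [Matrix.smul_mulVec, dotProduct_smul, smul_eq_mul]
    exact mul_nonneg (Complex.zero_le_real.mpr hr) (hA.dotProduct_mulVec_nonneg x)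

lemma integralComplexOfReal {α : Type*} [MeasurableSpace α] {μ : Measure α} {f : α → ℝ} :
    ∫ x, ((f x : ℝ) : ℂ) ∂μ = ((∫ x, f x ∂μ : ℝ) : ℂ) :=
  integral_ofReal (𝕜 := ℂ)

lemma integralComplexRe {α : Type*} [MeasurableSpace α] {μ : Measure α} {f : α → ℂ}
    (hf : Integrable f μ) : ∫ x, (f x).re ∂μ = (∫ x, f x ∂μ).re :=
  integral_re (𝕜 := ℂ) hf

/-- Bayesian estimation is optimal: Let `π₀` be a probability measure on
the density matrices on `ℂ^n` (the law of a random density matrix `ρ : Ω → Mₙ(ℂ)`).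
Measurement records `M j`, `j = 1, …, J`, have conditional Born-rule probabilities
`L j ρ = ∏ k, Tr(E j k * ρ)` with `E j k` positive semidefinite and `∑ j, L j ρ = 1` on
density matrices.  Let `R(ρ:σ) = ∑ i, Tr(F i ρ) * R i σ` be a strictly proper scoring
rule for a POVM `{F i}`.  With `p j = ∫ L j (ρ) dπ₀ > 0` and posterior means
`ρ̄ j = (1 / p j) ∫ ρ * L j (ρ) dπ₀` (entrywise), each `ρ̄ j` is a density matrix; for
every assignment of reports `j ↦ σ j` the total expected reward
`∑ j, ∫ R(ρ:σ j) * L j (ρ) dπ₀` equals `∑ j, p j * R(ρ̄ j : σ j)`, and it is uniquely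
maximized over assignments of density matrices by `σ = ρ̄`. -/
theorem stmt_16 {n m J : ℕ} {N : ℕ} {Ω : Type*} [MeasurableSpace Ω]
    (π₀ : Measure Ω) [IsProbabilityMeasure π₀]
    (ρ : Ω → Matrix (Fin n) (Fin n) ℂ)
    (hρ : ∀ ω, (ρ ω).PosSemidef ∧ (ρ ω).trace = 1)
    (E : Fin J → Fin N → Matrix (Fin n) (Fin n) ℂ)
    (hE : ∀ j k, (E j k).PosSemidef)
    (L : Fin J → Matrix (Fin n) (Fin n) ℂ → ℝ)
    (hLdef : ∀ j ρ', L j ρ' = ∏ k, (Matrix.trace (E j k * ρ')).re)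
    (hLsum : ∀ ρ' : Matrix (Fin n) (Fin n) ℂ, ρ'.PosSemidef → ρ'.trace = 1 →
      ∑ j, L j ρ' = 1)
    (F : Fin m → Matrix (Fin n) (Fin n) ℂ)
    (hF : ∀ i, (F i).PosSemidef) (hFsum : ∑ i, F i = 1)
    (R : Fin m → Matrix (Fin n) (Fin n) ℂ → ℝ)
    (Rbar : Matrix (Fin n) (Fin n) ℂ → Matrix (Fin n) (Fin n) ℂ → ℝ)
    (hRbar : ∀ ρ' σ, Rbar ρ' σ = ∑ i, (Matrix.trace (F i * ρ')).re * R i σ)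
    (hproper : ∀ ρ' σ : Matrix (Fin n) (Fin n) ℂ,
      ρ'.PosSemidef → ρ'.trace = 1 → σ.PosSemidef → σ.trace = 1 → σ ≠ ρ' →
      Rbar ρ' σ < Rbar ρ' ρ')
    (p : Fin J → ℝ) (hp : ∀ j, p j = ∫ ω, L j (ρ ω) ∂π₀)
    (hppos : ∀ j, 0 < p j)
    (ρbar : Fin J → Matrix (Fin n) (Fin n) ℂ)
    (hρbardef : ∀ j, ρbar j
      = ((p j : ℂ))⁻¹ • Matrix.of fun a b => ∫ ω, (L j (ρ ω) : ℂ) * ρ ω a b ∂π₀)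
    (hintL : ∀ j, Integrable (fun ω => L j (ρ ω)) π₀)
    (hint1 : ∀ j a b, Integrable (fun ω => (L j (ρ ω) : ℂ) * ρ ω a b) π₀)
    (hint2 : ∀ j (σ : Matrix (Fin n) (Fin n) ℂ),
      Integrable (fun ω => Rbar (ρ ω) σ * L j (ρ ω)) π₀) :
    (∀ j, (ρbar j).PosSemidef ∧ (ρbar j).trace = 1)
    ∧ (∀ σ : Fin J → Matrix (Fin n) (Fin n) ℂ,
        (∑ j, ∫ ω, Rbar (ρ ω) (σ j) * L j (ρ ω) ∂π₀)
          = ∑ j, p j * Rbar (ρbar j) (σ j))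
    ∧ (∀ σ : Fin J → Matrix (Fin n) (Fin n) ℂ,
        (∀ j, (σ j).PosSemidef ∧ (σ j).trace = 1) →
        ((∑ j, ∫ ω, Rbar (ρ ω) (σ j) * L j (ρ ω) ∂π₀)
            ≤ ∑ j, ∫ ω, Rbar (ρ ω) (ρbar j) * L j (ρ ω) ∂π₀)
        ∧ ((∑ j, ∫ ω, Rbar (ρ ω) (σ j) * L j (ρ ω) ∂π₀)
            = (∑ j, ∫ ω, Rbar (ρ ω) (ρbar j) * L j (ρ ω) ∂π₀) ↔ σ = ρbar)) := by
  -- the unnormalized posterior mean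
  set I : Fin J → Matrix (Fin n) (Fin n) ℂ :=
    fun j => Matrix.of fun a b => ∫ ω, (L j (ρ ω) : ℂ) * ρ ω a b ∂π₀ with hI
  -- nonnegativity of the likelihood
  have hLnn : ∀ j ω, 0 ≤ L j (ρ ω) := by
    intro j ω
    rw [hLdef]
    apply Finset.prod_nonneg
    intro k _
    exact (Complex.nonneg_iff.mp (psdTraceMulNonneg (hE j k) (hρ ω).1)).1
  -- pointwise rewriting of L·tr(Fm·ρ) as a finite sum
  have key : ∀ j (Fm : Matrix (Fin n) (Fin n) ℂ),
      (fun ω => (L j (ρ ω) : ℂ) * (Fm * ρ ω).trace)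
        = fun ω => ∑ a, ∑ b, Fm a b * ((L j (ρ ω) : ℂ) * ρ ω b a) := by
    intro j Fm
    funext ω
    simp only [Matrix.trace, Matrix.diag, Matrix.mul_apply, Finset.mul_sum]
    congr 1; funext a; congr 1; funext b; ring
  have hIint : ∀ (j : Fin J) (Fm : Matrix (Fin n) (Fin n) ℂ),
      Integrable (fun ω => (L j (ρ ω) : ℂ) * (Fm * ρ ω).trace) π₀ := by
    intro j Fm
    rw [key]
    exact integrable_finset_sum _ fun a _ =>
      integrable_finset_sum _ fun b _ => (hint1 j b a).const_mul (Fm a b)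
  have htrace : ∀ (j : Fin J) (Fm : Matrix (Fin n) (Fin n) ℂ),
      ∫ ω, (L j (ρ ω) : ℂ) * (Fm * ρ ω).trace ∂π₀ = (Fm * I j).trace := by
    intro j Fm
    rw [key]
    rw [integral_finset_sum _ fun a _ => integrable_finset_sum _
      fun b _ => (hint1 j b a).const_mul (Fm a b)]
    have : ∀ a : Fin n, ∫ ω, ∑ b, Fm a b * ((L j (ρ ω) : ℂ) * ρ ω b a) ∂π₀
        = ∑ b, Fm a b * ∫ ω, (L j (ρ ω) : ℂ) * ρ ω b a ∂π₀ := by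
      intro a
      rw [integral_finset_sum _ fun b _ => (hint1 j b a).const_mul (Fm a b)]
      exact Finset.sum_congr rfl fun b _ => integral_const_mul _ _
    simp only [this]
    simp only [Matrix.trace, Matrix.diag, Matrix.mul_apply, hI, Matrix.of_apply]
  have hpC : ∀ j, ((p j : ℂ)) ≠ 0 := by
    intro j
    exact_mod_cast ne_of_gt (Complex.zero_lt_real.mpr (hppos j))
  -- trace of I j is p j
  have htraceI : ∀ j, (I j).trace = (p j : ℂ) := by
    intro j
    have h1 := htrace j 1
    simp only [one_mul] at h1
    rw [← h1]
    have : (fun ω => (L j (ρ ω) : ℂ) * (ρ ω).trace) = fun ω => ((L j (ρ ω) : ℝ) : ℂ) := by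
      funext ω; rw [(hρ ω).2, mul_one]
    rw [this, integralComplexOfReal, ← hp j]
  -- the quadratic form of I j
  have hIpsd : ∀ j, (I j).PosSemidef := by
    intro j
    refine Matrix.PosSemidef.of_dotProduct_mulVec_nonneg ?_ ?_
    · ext a b
      simp only [Matrix.conjTranspose_apply, hI, Matrix.of_apply]
      rw [show (star (∫ ω, (L j (ρ ω) : ℂ) * ρ ω b a ∂π₀))
          = ∫ ω, (starRingEnd ℂ) ((L j (ρ ω) : ℂ) * ρ ω b a) ∂π₀ from integral_conj.symm]
      congr 1; funext ω
      rw [_root_.map_mul, Complex.conj_ofReal]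
      congr 1
      exact (hρ ω).1.1.apply a b
    · intro x
      rw [quadFormEqTrace, ← htrace j]
      have hptw : (fun ω => (L j (ρ ω) : ℂ) * ((Matrix.vecMulVec x (star x)) * ρ ω).trace)
          = fun ω => ((L j (ρ ω) * (star x ⬝ᵥ (ρ ω).mulVec x).re : ℝ) : ℂ) := by
        funext ω
        rw [← quadFormEqTrace]
        obtain ⟨hre, him⟩ := Complex.nonneg_iff.mp ((hρ ω).1.dotProduct_mulVec_nonneg x)
        rw [Complex.ofReal_mul]
        congr 1
        refine Complex.ext rfl ?_
        rw [Complex.ofReal_im, ← him]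
      rw [hptw, integralComplexOfReal, Complex.zero_le_real]
      apply integral_nonneg
      intro ω
      exact mul_nonneg (hLnn j ω) (Complex.nonneg_iff.mp ((hρ ω).1.dotProduct_mulVec_nonneg x)).1
  have hρbarI : ∀ j, ρbar j = ((p j : ℂ))⁻¹ • I j := hρbardef
  -- Part 1: ρbar j is a density matrix
  have hdens : ∀ j, (ρbar j).PosSemidef ∧ (ρbar j).trace = 1 := by
    intro j
    constructor
    · rw [hρbarI j, ← Complex.ofReal_inv]
      exact psdSmul (hIpsd j) (inv_nonneg.mpr (hppos j).le)
    · rw [hρbarI j, Matrix.trace_smul, htraceI, smul_eq_mul, inv_mul_cancel₀ (hpC j)]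
  -- Part 2: evaluation of each integral
  have heval : ∀ (j : Fin J) (σ : Matrix (Fin n) (Fin n) ℂ),
      ∫ ω, Rbar (ρ ω) σ * L j (ρ ω) ∂π₀ = p j * Rbar (ρbar j) σ := by
    intro j σ
    have hterm : ∀ i : Fin m,
        (fun ω => ((F i * ρ ω).trace).re * R i σ * L j (ρ ω))
          = fun ω => ((L j (ρ ω) : ℂ) * (F i * ρ ω).trace).re * R i σ := by
      intro i
      funext ω
      rw [Complex.re_ofReal_mul]
      ring
    have hinteg : ∀ i : Fin m,
        Integrable (fun ω => ((F i * ρ ω).trace).re * R i σ * L j (ρ ω)) π₀ := by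
      intro i
      rw [hterm i]
      exact ((hIint j (F i)).re).mul_const _
    calc ∫ ω, Rbar (ρ ω) σ * L j (ρ ω) ∂π₀
        = ∫ ω, ∑ i, ((F i * ρ ω).trace).re * R i σ * L j (ρ ω) ∂π₀ := by
          congr 1; funext ω; rw [hRbar, Finset.sum_mul]
      _ = ∑ i, ∫ ω, ((F i * ρ ω).trace).re * R i σ * L j (ρ ω) ∂π₀ :=
          integral_finset_sum _ (fun i _ => hinteg i)
      _ = ∑ i, ((F i * I j).trace).re * R i σ := by
          refine Finset.sum_congr rfl fun i _ => ?_
          rw [hterm i, integral_mul_const, integralComplexRe (hIint j (F i)),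
            htrace j (F i)]
      _ = p j * Rbar (ρbar j) σ := by
          rw [hRbar, Finset.mul_sum]
          refine Finset.sum_congr rfl fun i _ => ?_
          rw [hρbarI j, Matrix.mul_smul, Matrix.trace_smul, smul_eq_mul,
            ← Complex.ofReal_inv, Complex.re_ofReal_mul]
          have : p j * ((p j)⁻¹ * ((F i * I j).trace).re * R i σ)
              = (p j * (p j)⁻¹) * (((F i * I j).trace).re * R i σ) := by ring
          rw [this, mul_inv_cancel₀ (ne_of_gt (hppos j)), one_mul]
  have hsum : ∀ τ : Fin J → Matrix (Fin n) (Fin n) ℂ,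
      (∑ j, ∫ ω, Rbar (ρ ω) (τ j) * L j (ρ ω) ∂π₀)
        = ∑ j, p j * Rbar (ρbar j) (τ j) :=
    fun τ => Finset.sum_congr rfl fun j _ => heval j (τ j)
  refine ⟨hdens, hsum, ?_⟩
  intro σ hσ
  have hle : ∀ j : Fin J, p j * Rbar (ρbar j) (σ j) ≤ p j * Rbar (ρbar j) (ρbar j) := by
    intro j
    rcases eq_or_ne (σ j) (ρbar j) with h | h
    · rw [h]
    · exact le_of_lt (mul_lt_mul_of_pos_left
        (hproper _ _ (hdens j).1 (hdens j).2 (hσ j).1 (hσ j).2 h) (hppos j))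
  constructor
  · rw [hsum σ, hsum ρbar]
    exact Finset.sum_le_sum fun j _ => hle j
  · rw [hsum σ, hsum ρbar]
    constructor
    · intro heq
      by_contra hne
      obtain ⟨j0, hj0⟩ := Function.ne_iff.mp hne
      have hlt : ∑ j, p j * Rbar (ρbar j) (σ j) < ∑ j, p j * Rbar (ρbar j) (ρbar j) :=
        Finset.sum_lt_sum (fun j _ => hle j)
          ⟨j0, Finset.mem_univ _, mul_lt_mul_of_pos_left
            (hproper _ _ (hdens j0).1 (hdens j0).2 (hσ j0).1 (hσ j0).2 hj0) (hppos j0)⟩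
      exact absurd heq (ne_of_lt hlt)
    · intro h
      rw [h]
end
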